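/- arXiv:2007.15052 — 8 statements merged into one kernel-verified Lean document; each statement's English description precedes it below -/
import Mathlib

section
/- Let B be a symmetric positive definite d×d real matrix and X an arbitrary d×d real matrix. Define P(x) = ∫₀¹ B^{(1+x)s} X B^{-(1+x)s} ds for x ∈ ℝ. Then for all x ∈ ℝ, ⟨P(x), P(-x)⟩ ≥ |P(0)|², where ⟨·,·⟩ is the Frobenius inner product and |·| the Frobenius norm. -/
open Matrix MeasureTheory

variable {d : ℕ}

/-- Spectral real matrix power of a hermitian matrix. -/
noncomputable def mpow {A : Matrix (Fin d) (Fin d) ℝ} (hA : A.IsHermitian) (t : ℝ) :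
    Matrix (Fin d) (Fin d) ℝ :=
  (hA.eigenvectorUnitary : Matrix (Fin d) (Fin d) ℝ) *
    Matrix.diagonal (fun i => hA.eigenvalues i ^ t) *
    (star hA.eigenvectorUnitary : Matrix (Fin d) (Fin d) ℝ)

/-- Frobenius inner product. -/
def fip (X Y : Matrix (Fin d) (Fin d) ℝ) : ℝ := ∑ i, ∑ j, X i j * Y i j

/-- Frobenius norm. -/
noncomputable def fnorm (X : Matrix (Fin d) (Fin d) ℝ) : ℝ := Real.sqrt (fip X X)

/-- Entrywise integral over [0,1] of a matrix-valued function. -/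
noncomputable def mint (F : ℝ → Matrix (Fin d) (Fin d) ℝ) : Matrix (Fin d) (Fin d) ℝ :=
  Matrix.of fun i j => ∫ s in (0:ℝ)..1, F s i j

/- ---------- auxiliary lemmas ---------- -/

lemma exp_cs (u v : ℝ) :
    (∫ s in (0:ℝ)..1, Real.exp (((u + v) / 2) * s)) ^ 2 ≤
      (∫ s in (0:ℝ)..1, Real.exp (u * s)) * (∫ s in (0:ℝ)..1, Real.exp (v * s)) := by
  have hsq : ∀ A : ℝ, 0 ≤ A → (A ^ ((1:ℝ)/2)) ^ 2 = A := by
    intro A hA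
    rw [← Real.rpow_natCast (A ^ ((1:ℝ)/2)) 2, ← Real.rpow_mul hA]
    norm_num
  set μ : Measure ℝ := volume.restrict (Set.Ioc (0:ℝ) 1) with hμ
  haveI : IsFiniteMeasure μ := by
    constructor
    rw [hμ, Measure.restrict_apply_univ, Real.volume_Ioc]
    norm_num
  have hmem : ∀ w : ℝ, MemLp (fun s => Real.exp (w * s / 2)) (ENNReal.ofReal 2) μ := by
    intro w
    refine MemLp.of_bound ?_ (Real.exp (|w| / 2)) ?_
    · exact (Real.continuous_exp.comp
        ((continuous_const.mul continuous_id).div_const 2)).aestronglyMeasurable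
    · refine Filter.eventually_of_mem (self_mem_ae_restrict measurableSet_Ioc) ?_
      intro s hs
      rw [Real.norm_eq_abs, Real.abs_exp]
      apply Real.exp_le_exp.2
      have h1 : w * s ≤ |w| := by
        calc w * s ≤ |w * s| := le_abs_self _
        _ = |w| * |s| := abs_mul w s
        _ ≤ |w| * 1 := by
            apply mul_le_mul_of_nonneg_left _ (abs_nonneg w)
            rw [abs_of_pos hs.1]; exact hs.2
        _ = |w| := mul_one _
      linarith
  have hconj : Real.HolderConjugate 2 2 := Real.holderConjugate_iff.mpr ⟨one_lt_two, by norm_num⟩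
  have hcs := integral_mul_le_Lp_mul_Lq_of_nonneg (μ := μ) hconj
    (f := fun s => Real.exp (u * s / 2)) (g := fun s => Real.exp (v * s / 2))
    (Filter.Eventually.of_forall fun s => (Real.exp_pos _).le)
    (Filter.Eventually.of_forall fun s => (Real.exp_pos _).le)
    (hmem u) (hmem v)
  have hfg : ∀ s : ℝ, Real.exp (u * s / 2) * Real.exp (v * s / 2)
      = Real.exp (((u + v) / 2) * s) := by
    intro s; rw [← Real.exp_add]; ring_nf
  have hpw : ∀ w s : ℝ, Real.exp (w * s / 2) ^ (2:ℝ) = Real.exp (w * s) := by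
    intro w s
    rw [show (2:ℝ) = ((2:ℕ):ℝ) by norm_num, Real.rpow_natCast, sq, ← Real.exp_add]
    ring_nf
  simp only [hfg, hpw] at hcs
  rw [intervalIntegral.integral_of_le zero_le_one,
    intervalIntegral.integral_of_le zero_le_one,
    intervalIntegral.integral_of_le zero_le_one]
  have hA : 0 ≤ ∫ a, Real.exp (u * a) ∂μ :=
    integral_nonneg fun a => (Real.exp_pos _).le
  have hB : 0 ≤ ∫ a, Real.exp (v * a) ∂μ :=
    integral_nonneg fun a => (Real.exp_pos _).le
  have h0 : 0 ≤ ∫ a, Real.exp (((u + v) / 2) * a) ∂μ :=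
    integral_nonneg fun a => (Real.exp_pos _).le
  calc (∫ a, Real.exp (((u + v) / 2) * a) ∂μ) ^ 2
      ≤ ((∫ a, Real.exp (u * a) ∂μ) ^ ((1:ℝ)/2) *
          (∫ a, Real.exp (v * a) ∂μ) ^ ((1:ℝ)/2)) ^ 2 := by
        apply pow_le_pow_left₀ h0
        convert hcs using 2
    _ = (∫ a, Real.exp (u * a) ∂μ) * (∫ a, Real.exp (v * a) ∂μ) := by
        rw [mul_pow, hsq _ hA, hsq _ hB]

lemma fip_trace (A B : Matrix (Fin d) (Fin d) ℝ) : fip A B = (A * Bᵀ).trace := by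
  unfold fip
  simp [Matrix.trace, Matrix.mul_apply, Matrix.diag]

lemma fip_conj (Q A B : Matrix (Fin d) (Fin d) ℝ) (h : Qᵀ * Q = 1) :
    fip (Q * A * Qᵀ) (Q * B * Qᵀ) = fip A B := by
  rw [fip_trace, fip_trace]
  have h2 : (Q * B * Qᵀ)ᵀ = Q * Bᵀ * Qᵀ := by
    rw [Matrix.transpose_mul, Matrix.transpose_mul, Matrix.transpose_transpose,
      Matrix.mul_assoc]
  rw [h2]
  have h3 : Q * A * Qᵀ * (Q * Bᵀ * Qᵀ) = Q * (A * Bᵀ) * Qᵀ := by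
    calc Q * A * Qᵀ * (Q * Bᵀ * Qᵀ) = Q * A * (Qᵀ * Q) * Bᵀ * Qᵀ := by
          simp only [Matrix.mul_assoc]
      _ = Q * (A * Bᵀ) * Qᵀ := by
          rw [h, Matrix.mul_one]; simp only [Matrix.mul_assoc]
  rw [h3, Matrix.trace_mul_comm, ← Matrix.mul_assoc, h, Matrix.one_mul]

lemma key_aux (B X : Matrix (Fin d) (Fin d) ℝ) (hB : B.PosDef) (a : ℝ) :
    mint (fun s => mpow hB.1 (a * s) * X * mpow hB.1 (-(a * s))) =
      (hB.1.eigenvectorUnitary : Matrix (Fin d) (Fin d) ℝ) *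
        (Matrix.of fun k l =>
          ((star hB.1.eigenvectorUnitary : Matrix (Fin d) (Fin d) ℝ) * X *
              (hB.1.eigenvectorUnitary : Matrix (Fin d) (Fin d) ℝ)) k l *
            ∫ s in (0:ℝ)..1,
              Real.exp ((a * (Real.log (hB.1.eigenvalues k) -
                Real.log (hB.1.eigenvalues l))) * s)) *
        (star hB.1.eigenvectorUnitary : Matrix (Fin d) (Fin d) ℝ) := by
  set Q : Matrix (Fin d) (Fin d) ℝ := (hB.1.eigenvectorUnitary : Matrix (Fin d) (Fin d) ℝ) with hQ
  set sQ : Matrix (Fin d) (Fin d) ℝ :=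
    (star hB.1.eigenvectorUnitary : Matrix (Fin d) (Fin d) ℝ) with hsQ
  set ε : Fin d → ℝ := hB.1.eigenvalues with hεdef
  set Y : Matrix (Fin d) (Fin d) ℝ := sQ * X * Q with hY
  have hε : ∀ i, 0 < ε i := fun i => hB.eigenvalues_pos i
  have hmpow : ∀ t : ℝ, mpow hB.1 t =
      Q * Matrix.diagonal (fun i => Real.exp (t * Real.log (ε i))) * sQ := by
    intro t
    have hfun : (fun i => hB.1.eigenvalues i ^ t) =
        fun i => Real.exp (t * Real.log (ε i)) := by
      funext i; rw [← hεdef, Real.rpow_def_of_pos (hε i), mul_comm]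
    unfold mpow
    rw [hfun]
  have hprod : ∀ t : ℝ, mpow hB.1 t * X * mpow hB.1 (-t) =
      Q * (Matrix.of fun k l =>
        Real.exp (t * (Real.log (ε k) - Real.log (ε l))) * Y k l) * sQ := by
    intro t
    rw [hmpow t, hmpow (-t)]
    have hmid : Matrix.diagonal (fun i => Real.exp (t * Real.log (ε i))) * (sQ * X * Q) *
        Matrix.diagonal (fun i => Real.exp ((-t) * Real.log (ε i))) =
        Matrix.of fun k l =>
          Real.exp (t * (Real.log (ε k) - Real.log (ε l))) * Y k l := by
      ext k l
      simp only [Matrix.mul_diagonal, Matrix.diagonal_mul, Matrix.of_apply, ← hY]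
      rw [mul_right_comm, ← Real.exp_add]
      congr 2
      ring
    calc Q * Matrix.diagonal (fun i => Real.exp (t * Real.log (ε i))) * sQ * X *
          (Q * Matrix.diagonal (fun i => Real.exp ((-t) * Real.log (ε i))) * sQ)
        = Q * (Matrix.diagonal (fun i => Real.exp (t * Real.log (ε i))) * (sQ * X * Q) *
            Matrix.diagonal (fun i => Real.exp ((-t) * Real.log (ε i)))) * sQ := by
          simp only [Matrix.mul_assoc]
      _ = Q * (Matrix.of fun k l =>
            Real.exp (t * (Real.log (ε k) - Real.log (ε l))) * Y k l) * sQ := by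
          rw [hmid]
  have hcont : ∀ (C w : ℝ), Continuous fun s : ℝ => C * Real.exp (w * s) :=
    fun C w => continuous_const.mul (Real.continuous_exp.comp (continuous_const.mul continuous_id))
  apply Matrix.ext
  intro i j
  show (∫ s in (0:ℝ)..1, (mpow hB.1 (a * s) * X * mpow hB.1 (-(a * s))) i j) = _
  have hentry : ∀ s : ℝ, (mpow hB.1 (a * s) * X * mpow hB.1 (-(a * s))) i j =
      ∑ l, ∑ k, (Q i k * Y k l * sQ l j) *
        Real.exp ((a * (Real.log (ε k) - Real.log (ε l))) * s) := by
    intro s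
    rw [hprod (a * s)]
    simp only [Matrix.mul_apply, Matrix.of_apply, Finset.sum_mul]
    refine Finset.sum_congr rfl fun l _ => Finset.sum_congr rfl fun k _ => ?_
    rw [show (a * s) * (Real.log (ε k) - Real.log (ε l)) =
      (a * (Real.log (ε k) - Real.log (ε l))) * s by ring]
    ring
  rw [intervalIntegral.integral_congr (g := fun s => ∑ l, ∑ k,
      (Q i k * Y k l * sQ l j) *
        Real.exp ((a * (Real.log (ε k) - Real.log (ε l))) * s))
    (fun s _ => hentry s)]
  rw [intervalIntegral.integral_finset_sum (fun l _ =>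
    (continuous_finset_sum _ fun k _ => hcont _ _).intervalIntegrable 0 1)]
  show _ = (Q * Matrix.of (fun k l => Y k l *
      ∫ s in (0:ℝ)..1, Real.exp ((a * (Real.log (ε k) - Real.log (ε l))) * s)) * sQ) i j
  simp only [Matrix.mul_apply, Matrix.of_apply, Finset.sum_mul]
  refine Finset.sum_congr rfl fun l _ => ?_
  rw [intervalIntegral.integral_finset_sum (fun k _ =>
    (hcont _ _).intervalIntegrable 0 1)]
  refine Finset.sum_congr rfl fun k _ => ?_
  rw [intervalIntegral.integral_const_mul]
  ring

theorem stmt0 (B X : Matrix (Fin d) (Fin d) ℝ) (hB : B.PosDef)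
    (P : ℝ → Matrix (Fin d) (Fin d) ℝ)
    (hP : ∀ x : ℝ, P x =
      mint (fun s => mpow hB.1 ((1 + x) * s) * X * mpow hB.1 (-((1 + x) * s)))) :
    ∀ x : ℝ, fip (P x) (P (-x)) ≥ (fnorm (P 0)) ^ 2 := by
  intro x
  set Q : Matrix (Fin d) (Fin d) ℝ := (hB.1.eigenvectorUnitary : Matrix (Fin d) (Fin d) ℝ) with hQdef
  set sQ : Matrix (Fin d) (Fin d) ℝ :=
    (star hB.1.eigenvectorUnitary : Matrix (Fin d) (Fin d) ℝ) with hsQdef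
  set ε : Fin d → ℝ := hB.1.eigenvalues with hεdef
  set Y : Matrix (Fin d) (Fin d) ℝ := sQ * X * Q with hYdef
  set G : ℝ → Fin d → Fin d → ℝ := fun a k l =>
    ∫ s in (0:ℝ)..1, Real.exp ((a * (Real.log (ε k) - Real.log (ε l))) * s) with hG
  have hsQT : sQ = Qᵀ := by
    rw [hsQdef, hQdef]
    ext i j
    simp [Unitary.coe_star, Matrix.star_apply]
  have horth : Qᵀ * Q = 1 := by
    rw [← hsQT]
    exact Unitary.coe_star_mul_self _
  have hform : ∀ a : ℝ,
      mint (fun s => mpow hB.1 (a * s) * X * mpow hB.1 (-(a * s))) =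
        Q * (Matrix.of fun k l => Y k l * G a k l) * Qᵀ := by
    intro a
    rw [key_aux B X hB a, ← hsQT]
  have h1 : P x = Q * (Matrix.of fun k l => Y k l * G (1 + x) k l) * Qᵀ := by
    rw [hP x]; exact hform (1 + x)
  have h2 : P (-x) = Q * (Matrix.of fun k l => Y k l * G (1 + -x) k l) * Qᵀ := by
    rw [hP (-x)]; exact hform (1 + -x)
  have h0 : P 0 = Q * (Matrix.of fun k l => Y k l * G (1 + 0) k l) * Qᵀ := by
    rw [hP 0]; exact hform (1 + 0)
  have hfipself : 0 ≤ fip (P 0) (P 0) :=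
    Finset.sum_nonneg fun i _ => Finset.sum_nonneg fun j _ => mul_self_nonneg _
  have hfn : fnorm (P 0) ^ 2 = fip (P 0) (P 0) := Real.sq_sqrt hfipself
  rw [ge_iff_le, hfn, h0, h1, h2, fip_conj _ _ _ horth, fip_conj _ _ _ horth]
  unfold fip
  refine Finset.sum_le_sum fun k _ => Finset.sum_le_sum fun l _ => ?_
  simp only [Matrix.of_apply]
  have hkey : G (1 + 0) k l ^ 2 ≤ G (1 + x) k l * G (1 + -x) k l := by
    have h := exp_cs ((1 + x) * (Real.log (ε k) - Real.log (ε l)))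
      ((1 + -x) * (Real.log (ε k) - Real.log (ε l)))
    have harg : ((1 + x) * (Real.log (ε k) - Real.log (ε l)) +
        (1 + -x) * (Real.log (ε k) - Real.log (ε l))) / 2 =
        (1 + 0) * (Real.log (ε k) - Real.log (ε l)) := by ring
    simp only [harg] at h
    simp only [hG]
    exact h
  nlinarith [mul_le_mul_of_nonneg_left hkey (mul_self_nonneg (Y k l)),
    mul_self_nonneg (Y k l)]
end

section
/- Let B be a symmetric positive definite d×d real matrix, X a d×d real matrix, L = log B, and define f(x) = ∫₀¹∫₀¹ ⟨B^{s+t+(s-t)x} X B^{-(s+t+(s-t)x)}, X⟩ ds dt. Then f is twice differentiable and f''(x) = ∫₀¹∫₀¹ |(s-t) B^{(s+t+(s-t)x)/2} (LX - XL) B^{-(s+t+(s-t)x)/2}|² ds dt ≥ 0 for all x ∈ ℝ; in particular f is convex on ℝ. -/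
open Matrix MeasureTheory

variable {d : ℕ}

/-- Spectral matrix logarithm of a hermitian (positive definite) matrix. -/
noncomputable def mlog {A : Matrix (Fin d) (Fin d) ℝ} (hA : A.IsHermitian) :
    Matrix (Fin d) (Fin d) ℝ :=
  (hA.eigenvectorUnitary : Matrix (Fin d) (Fin d) ℝ) *
    Matrix.diagonal (fun i => Real.log (hA.eigenvalues i)) *
    (star hA.eigenvectorUnitary : Matrix (Fin d) (Fin d) ℝ)

/-- Entrywise derivative of a matrix-valued function. -/
noncomputable def mderiv {m : ℕ} (F : ℝ → Matrix (Fin m) (Fin m) ℝ) (x : ℝ) :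
    Matrix (Fin m) (Fin m) ℝ :=
  Matrix.of fun i j => deriv (fun y => F y i j) x

section Aux


open intervalIntegral

/-- Auxiliary: moments of the exponential on `[0,1]`. -/
noncomputable def En (n : ℕ) (a : ℝ) : ℝ := ∫ s in (0:ℝ)..1, s ^ n * Real.exp (s * a)

lemma En_cont (n : ℕ) (a : ℝ) : Continuous (fun s : ℝ => s ^ n * Real.exp (s * a)) := by
  continuity

lemma En_hasDerivAt (n : ℕ) (a₀ : ℝ) : HasDerivAt (En n) (En (n+1) a₀) a₀ := by
  have key := intervalIntegral.hasDerivAt_integral_of_dominated_loc_of_deriv_le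
    (F := fun (a : ℝ) (s : ℝ) => s ^ n * Real.exp (s * a))
    (F' := fun (a : ℝ) (s : ℝ) => s ^ (n+1) * Real.exp (s * a))
    (a := (0:ℝ)) (b := 1) (μ := volume) (x₀ := a₀) (s := Metric.ball a₀ 1)
    (bound := fun _ => Real.exp (|a₀| + 1))
    (Metric.ball_mem_nhds a₀ one_pos)
    (Filter.Eventually.of_forall fun a => (En_cont n a).aestronglyMeasurable)
    ((En_cont n a₀).intervalIntegrable 0 1)
    ((En_cont (n+1) a₀).aestronglyMeasurable)
    ?_ (intervalIntegrable_const) ?_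
  · exact key.2
  · refine Filter.Eventually.of_forall fun s hs a ha => ?_
    have hs' : s ∈ Set.Ioc (0:ℝ) 1 := by rwa [Set.uIoc_of_le zero_le_one] at hs
    have h1 : |s ^ (n+1)| ≤ 1 := by
      rw [abs_pow]
      exact pow_le_one₀ (abs_nonneg s) (abs_le.2 ⟨by linarith [hs'.1], hs'.2⟩)
    have h2 : Real.exp (s * a) ≤ Real.exp (|a₀| + 1) := by
      apply Real.exp_le_exp.2
      have : |a| ≤ |a₀| + 1 := by
        have := abs_sub_abs_le_abs_sub a a₀
        simp only [Metric.mem_ball, Real.dist_eq] at ha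
        linarith
      calc s * a ≤ |s * a| := le_abs_self _
        _ = |s| * |a| := abs_mul s a
        _ ≤ 1 * (|a₀| + 1) := by
            apply mul_le_mul _ this (abs_nonneg a) zero_le_one
            exact abs_le.2 ⟨by linarith [hs'.1], hs'.2⟩
        _ = |a₀| + 1 := one_mul _
    calc ‖s ^ (n+1) * Real.exp (s * a)‖ = |s ^ (n+1)| * Real.exp (s * a) := by
          rw [norm_mul, Real.norm_eq_abs, Real.norm_eq_abs, abs_of_pos (Real.exp_pos _)]
      _ ≤ 1 * Real.exp (|a₀| + 1) := mul_le_mul h1 h2 (Real.exp_pos _).le zero_le_one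
      _ = _ := one_mul _
  · refine Filter.Eventually.of_forall fun s _ a _ => ?_
    have h1 : HasDerivAt (fun a : ℝ => s * a) s a := by
      simpa using (hasDerivAt_id a).const_mul s
    have h : HasDerivAt (fun a : ℝ => s ^ n * Real.exp (s * a))
        (s ^ n * (Real.exp (s * a) * s)) a := (h1.exp).const_mul _
    refine h.congr_deriv ?_
    show _ = s ^ (n+1) * Real.exp (s * a)
    rw [pow_succ]; ring

lemma hEa (n : ℕ) (μ x : ℝ) :
    HasDerivAt (fun y : ℝ => En n (μ * (1 + y))) (μ * En (n+1) (μ * (1 + x))) x := by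
  have inner : HasDerivAt (fun y : ℝ => μ * (1 + y)) μ x := by
    simpa using ((hasDerivAt_id x).const_add (1:ℝ)).const_mul μ
  simpa [Function.comp_def, mul_comm] using (En_hasDerivAt n (μ * (1 + x))).comp x inner

lemma hEb (n : ℕ) (μ x : ℝ) :
    HasDerivAt (fun y : ℝ => En n (μ * (1 - y))) (-(μ * En (n+1) (μ * (1 - x)))) x := by
  have inner : HasDerivAt (fun y : ℝ => μ * (1 - y)) (-μ) x := by
    simpa using ((hasDerivAt_id x).const_sub (1:ℝ)).const_mul μ
  have := (En_hasDerivAt n (μ * (1 - x))).comp x inner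
  simp only [Function.comp_def] at this
  refine this.congr_deriv ?_
  ring

lemma int_cexp (C A : ℝ) : (∫ t in (0:ℝ)..1, C * Real.exp (t * A)) = C * En 0 A := by
  rw [intervalIntegral.integral_const_mul, En]
  simp

lemma int_comb3 (C0 C1 C2 A : ℝ) :
    (∫ t in (0:ℝ)..1, (C0 * (t ^ 0 * Real.exp (t * A)) - C1 * (t ^ 1 * Real.exp (t * A))
      + C2 * (t ^ 2 * Real.exp (t * A))))
    = C0 * En 0 A - C1 * En 1 A + C2 * En 2 A := by
  have h0 : IntervalIntegrable (fun t : ℝ => C0 * (t ^ 0 * Real.exp (t * A))) volume 0 1 :=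
    Continuous.intervalIntegrable (by continuity) 0 1
  have h1 : IntervalIntegrable (fun t : ℝ => C1 * (t ^ 1 * Real.exp (t * A))) volume 0 1 :=
    Continuous.intervalIntegrable (by continuity) 0 1
  have h2 : IntervalIntegrable (fun t : ℝ => C2 * (t ^ 2 * Real.exp (t * A))) volume 0 1 :=
    Continuous.intervalIntegrable (by continuity) 0 1
  rw [intervalIntegral.integral_add (h0.sub h1) h2, intervalIntegral.integral_sub h0 h1,
    intervalIntegral.integral_const_mul, intervalIntegral.integral_const_mul,
    intervalIntegral.integral_const_mul]
  rfl

lemma hpoly (A t : ℝ) : (∫ s in (0:ℝ)..1, (s - t) ^ 2 * Real.exp (s * A))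
    = En 2 A - 2 * t * En 1 A + t ^ 2 * En 0 A := by
  have : ∀ s ∈ Set.uIcc (0:ℝ) 1, (s - t) ^ 2 * Real.exp (s * A)
      = t ^ 2 * (s ^ 0 * Real.exp (s * A)) - (2 * t) * (s ^ 1 * Real.exp (s * A))
        + 1 * (s ^ 2 * Real.exp (s * A)) := fun s _ => by ring
  rw [intervalIntegral.integral_congr this, int_comb3]
  ring

lemma double_int_f {ι : Type*} [Fintype ι] (c mm : ι → ℝ) (x : ℝ) :
    (∫ t in (0:ℝ)..1, ∫ s in (0:ℝ)..1, ∑ p, c p * Real.exp ((s + t + (s - t) * x) * mm p))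
    = ∑ p, c p * (En 0 (mm p * (1 + x)) * En 0 (mm p * (1 - x))) := by
  have hin : ∀ t : ℝ, (∫ s in (0:ℝ)..1, ∑ p, c p * Real.exp ((s + t + (s - t) * x) * mm p))
      = ∑ p, (c p * En 0 (mm p * (1 + x))) * Real.exp (t * (mm p * (1 - x))) := by
    intro t
    rw [intervalIntegral.integral_finset_sum (fun p _ =>
      (Continuous.intervalIntegrable (by continuity) 0 1))]
    refine Finset.sum_congr rfl fun p _ => ?_
    have hc : ∀ s ∈ Set.uIcc (0:ℝ) 1, c p * Real.exp ((s + t + (s - t) * x) * mm p)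
        = (c p * Real.exp (t * (mm p * (1 - x)))) * Real.exp (s * (mm p * (1 + x))) := by
      intro s _
      rw [show (s + t + (s - t) * x) * mm p
        = t * (mm p * (1 - x)) + s * (mm p * (1 + x)) by ring, Real.exp_add]
      ring
    rw [intervalIntegral.integral_congr hc, intervalIntegral.integral_const_mul]
    rw [show (∫ s in (0:ℝ)..1, Real.exp (s * (mm p * (1 + x)))) = En 0 (mm p * (1 + x)) by
      rw [En]; simp]
    ring
  rw [intervalIntegral.integral_congr (fun t _ => hin t),
    intervalIntegral.integral_finset_sum (fun p _ =>
      (Continuous.intervalIntegrable (by continuity) 0 1))]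
  refine Finset.sum_congr rfl fun p _ => ?_
  rw [int_cexp]
  ring

lemma double_int_g {ι : Type*} [Fintype ι] (c mm : ι → ℝ) (x : ℝ) :
    (∫ t in (0:ℝ)..1, ∫ s in (0:ℝ)..1,
      ∑ p, (s - t) ^ 2 * (c p * Real.exp ((s + t + (s - t) * x) * mm p)))
    = ∑ p, c p * (En 2 (mm p * (1 + x)) * En 0 (mm p * (1 - x))
        - 2 * (En 1 (mm p * (1 + x)) * En 1 (mm p * (1 - x)))
        + En 0 (mm p * (1 + x)) * En 2 (mm p * (1 - x))) := by
  have hin : ∀ t : ℝ, (∫ s in (0:ℝ)..1,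
      ∑ p, (s - t) ^ 2 * (c p * Real.exp ((s + t + (s - t) * x) * mm p)))
      = ∑ p, ((c p * En 2 (mm p * (1 + x))) * (t ^ 0 * Real.exp (t * (mm p * (1 - x))))
        - (2 * (c p * En 1 (mm p * (1 + x)))) * (t ^ 1 * Real.exp (t * (mm p * (1 - x))))
        + (c p * En 0 (mm p * (1 + x))) * (t ^ 2 * Real.exp (t * (mm p * (1 - x))))) := by
    intro t
    rw [intervalIntegral.integral_finset_sum (fun p _ =>
      (Continuous.intervalIntegrable (by continuity) 0 1))]
    refine Finset.sum_congr rfl fun p _ => ?_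
    have hc : ∀ s ∈ Set.uIcc (0:ℝ) 1, (s - t) ^ 2 * (c p * Real.exp ((s + t + (s - t) * x) * mm p))
        = (c p * Real.exp (t * (mm p * (1 - x)))) *
          ((s - t) ^ 2 * Real.exp (s * (mm p * (1 + x)))) := by
      intro s _
      rw [show (s + t + (s - t) * x) * mm p
        = t * (mm p * (1 - x)) + s * (mm p * (1 + x)) by ring, Real.exp_add]
      ring
    rw [intervalIntegral.integral_congr hc, intervalIntegral.integral_const_mul, hpoly]
    ring
  rw [intervalIntegral.integral_congr (fun t _ => hin t),
    intervalIntegral.integral_finset_sum (fun p _ =>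
      (Continuous.intervalIntegrable (by continuity) 0 1))]
  refine Finset.sum_congr rfl fun p _ => ?_
  rw [int_comb3]
  ring

lemma fip_eq_trace (X Y : Matrix (Fin d) (Fin d) ℝ) : fip X Y = Matrix.trace (star X * Y) := by
  simp only [fip, Matrix.trace, Matrix.diag_apply, Matrix.mul_apply, Matrix.star_apply,
    star_trivial]
  rw [Finset.sum_comm]

lemma fip_conj_s2 (U M Z : Matrix (Fin d) (Fin d) ℝ) :
    fip (U * M * star U) Z = fip M (star U * Z * U) := by
  rw [fip_eq_trace, fip_eq_trace]
  rw [StarMul.star_mul, StarMul.star_mul, star_star]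
  calc Matrix.trace (U * (star M * star U) * Z)
      = Matrix.trace (star M * star U * Z * U) := by
        rw [show U * (star M * star U) * Z = U * (star M * star U * Z) by
          simp only [Matrix.mul_assoc], Matrix.trace_mul_comm, Matrix.mul_assoc]
    _ = Matrix.trace (star M * (star U * Z * U)) := by
        simp only [Matrix.mul_assoc]

lemma fip_self_nonneg (Z : Matrix (Fin d) (Fin d) ℝ) : 0 ≤ fip Z Z :=
  Finset.sum_nonneg fun _ _ => Finset.sum_nonneg fun _ _ => mul_self_nonneg _

lemma fip_smul_self (c : ℝ) (Z : Matrix (Fin d) (Fin d) ℝ) :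
    fip (c • Z) (c • Z) = c ^ 2 * fip Z Z := by
  simp only [fip, Matrix.smul_apply, smul_eq_mul, Finset.mul_sum]
  refine Finset.sum_congr rfl fun i _ => Finset.sum_congr rfl fun j _ => by ring

/-- `Uᵀ X U` entries squared. -/
noncomputable def cc {B : Matrix (Fin d) (Fin d) ℝ} (hA : B.IsHermitian)
    (X : Matrix (Fin d) (Fin d) ℝ) (p : Fin d × Fin d) : ℝ :=
  ((star (hA.eigenvectorUnitary : Matrix (Fin d) (Fin d) ℝ) * X *
    (hA.eigenvectorUnitary : Matrix (Fin d) (Fin d) ℝ)) p.1 p.2) ^ 2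

/-- Differences of logs of eigenvalues. -/
noncomputable def emm {B : Matrix (Fin d) (Fin d) ℝ} (hA : B.IsHermitian)
    (p : Fin d × Fin d) : ℝ :=
  Real.log (hA.eigenvalues p.1) - Real.log (hA.eigenvalues p.2)

lemma key1 (B X : Matrix (Fin d) (Fin d) ℝ) (hB : B.PosDef) (r : ℝ) :
    fip (mpow hB.1 r * X * mpow hB.1 (-r)) X =
      ∑ p : Fin d × Fin d, cc hB.1 X p * Real.exp (r * emm hB.1 p) := by
  simp only [cc, emm]
  set U : Matrix (Fin d) (Fin d) ℝ := (hB.1.eigenvectorUnitary : Matrix (Fin d) (Fin d) ℝ)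
    with hU
  set e : Fin d → ℝ := hB.1.eigenvalues with he
  have hmm : mpow hB.1 r * X * mpow hB.1 (-r) =
      U * (Matrix.diagonal (fun i => e i ^ r) * (star U * X * U) *
        Matrix.diagonal (fun i => e i ^ (-r))) * star U := by
    simp only [mpow, Matrix.mul_assoc, ← hU, ← he]
  rw [hmm, fip_conj_s2, Fintype.sum_prod_type]
  simp only [fip, Matrix.mul_diagonal, Matrix.diagonal_mul]
  refine Finset.sum_congr rfl fun i _ => Finset.sum_congr rfl fun j _ => ?_
  set Y : ℝ := (star U * X * U) i j
  calc e i ^ r * Y * e j ^ (-r) * Y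
      = (Real.exp (Real.log (e i) * r) * Real.exp (Real.log (e j) * (-r))) * Y ^ 2 := by
        rw [Real.rpow_def_of_pos (hB.eigenvalues_pos i),
          Real.rpow_def_of_pos (hB.eigenvalues_pos j)]
        ring
    _ = Real.exp (Real.log (e i) * r + Real.log (e j) * (-r)) * Y ^ 2 := by
        rw [← Real.exp_add]
    _ = Y ^ 2 * Real.exp (r * (Real.log (e i) - Real.log (e j))) := by
        rw [show Real.log (e i) * r + Real.log (e j) * (-r)
          = r * (Real.log (e i) - Real.log (e j)) by ring]; ring

lemma key2 (B X : Matrix (Fin d) (Fin d) ℝ) (hB : B.PosDef) (r : ℝ) :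
    fip (mpow hB.1 (r/2) * (mlog hB.1 * X - X * mlog hB.1) * mpow hB.1 (-(r/2)))
        (mpow hB.1 (r/2) * (mlog hB.1 * X - X * mlog hB.1) * mpow hB.1 (-(r/2))) =
      ∑ p : Fin d × Fin d,
        cc hB.1 X p * emm hB.1 p ^ 2 * Real.exp (r * emm hB.1 p) := by
  simp only [cc, emm]
  set U : Matrix (Fin d) (Fin d) ℝ := (hB.1.eigenvectorUnitary : Matrix (Fin d) (Fin d) ℝ)
    with hU
  set e : Fin d → ℝ := hB.1.eigenvalues with he
  have hU2 : star U * U = 1 := by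
    simpa [hU] using unitary.coe_star_mul_self hB.1.eigenvectorUnitary
  have cancel : ∀ Z : Matrix (Fin d) (Fin d) ℝ, star U * (U * Z) = Z := fun Z => by
    rw [← Matrix.mul_assoc, hU2, Matrix.one_mul]
  set Dlog : Matrix (Fin d) (Fin d) ℝ := Matrix.diagonal (fun i => Real.log (e i)) with hDl
  set Yc : Matrix (Fin d) (Fin d) ℝ := star U * X * U with hYc
  have hW : mpow hB.1 (r/2) * (mlog hB.1 * X - X * mlog hB.1) * mpow hB.1 (-(r/2)) =
      U * (Matrix.diagonal (fun i => e i ^ (r/2)) * (Dlog * Yc - Yc * Dlog) *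
        Matrix.diagonal (fun i => e i ^ (-(r/2)))) * star U := by
    simp only [mpow, mlog, hDl, hYc, ← hU, ← he, Matrix.mul_sub, Matrix.sub_mul,
      Matrix.mul_assoc, cancel]
  rw [hW, fip_conj_s2]
  have hmid : star U * (U * (Matrix.diagonal (fun i => e i ^ (r/2)) * (Dlog * Yc - Yc * Dlog) *
      Matrix.diagonal (fun i => e i ^ (-(r/2)))) * star U) * U =
      Matrix.diagonal (fun i => e i ^ (r/2)) * (Dlog * Yc - Yc * Dlog) *
        Matrix.diagonal (fun i => e i ^ (-(r/2))) := by
    simp only [Matrix.mul_assoc, cancel, hU2, Matrix.mul_one]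
  rw [hmid, Fintype.sum_prod_type]
  simp only [fip, hDl, Matrix.mul_diagonal, Matrix.diagonal_mul, Matrix.sub_apply]
  refine Finset.sum_congr rfl fun i _ => Finset.sum_congr rfl fun j _ => ?_
  set Y : ℝ := Yc i j
  calc e i ^ (r/2) * (Real.log (e i) * Y - Y * Real.log (e j)) * e j ^ (-(r/2)) *
        (e i ^ (r/2) * (Real.log (e i) * Y - Y * Real.log (e j)) * e j ^ (-(r/2)))
      = (Real.exp (Real.log (e i) * (r/2)) * Real.exp (Real.log (e i) * (r/2))) *
        (Real.exp (Real.log (e j) * (-(r/2))) * Real.exp (Real.log (e j) * (-(r/2)))) *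
        (Real.log (e i) * Y - Y * Real.log (e j)) ^ 2 := by
        rw [Real.rpow_def_of_pos (hB.eigenvalues_pos i),
          Real.rpow_def_of_pos (hB.eigenvalues_pos j)]
        ring
    _ = Real.exp ((Real.log (e i) * (r/2) + Real.log (e i) * (r/2)) +
          (Real.log (e j) * (-(r/2)) + Real.log (e j) * (-(r/2)))) *
        (Real.log (e i) * Y - Y * Real.log (e j)) ^ 2 := by
        rw [← Real.exp_add, ← Real.exp_add, ← Real.exp_add]
    _ = Y ^ 2 * (Real.log (e i) - Real.log (e j)) ^ 2 *
        Real.exp (r * (Real.log (e i) - Real.log (e j))) := by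
        rw [show (Real.log (e i) * (r/2) + Real.log (e i) * (r/2)) +
          (Real.log (e j) * (-(r/2)) + Real.log (e j) * (-(r/2)))
          = r * (Real.log (e i) - Real.log (e j)) by ring]
        ring

end Aux

theorem stmt2 (B X : Matrix (Fin d) (Fin d) ℝ) (hB : B.PosDef)
    (L : Matrix (Fin d) (Fin d) ℝ) (hL : L = mlog hB.1)
    (f : ℝ → ℝ)
    (hf : ∀ x : ℝ, f x = ∫ t in (0:ℝ)..1, ∫ s in (0:ℝ)..1,
      fip (mpow hB.1 (s + t + (s - t) * x) * X * mpow hB.1 (-(s + t + (s - t) * x))) X)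
    (g : ℝ → ℝ)
    (hg : ∀ x : ℝ, g x = ∫ t in (0:ℝ)..1, ∫ s in (0:ℝ)..1,
      (fnorm ((s - t) • (mpow hB.1 ((s + t + (s - t) * x) / 2) * (L * X - X * L) *
        mpow hB.1 (-((s + t + (s - t) * x) / 2))))) ^ 2) :
    ∃ f' : ℝ → ℝ,
      (∀ x : ℝ, HasDerivAt f (f' x) x) ∧
      (∀ x : ℝ, HasDerivAt f' (g x) x) ∧
      (∀ x : ℝ, 0 ≤ g x) ∧
      ConvexOn ℝ Set.univ f := by
  classical
  set c : Fin d × Fin d → ℝ := cc hB.1 X with hcdef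
  set mm : Fin d × Fin d → ℝ := emm hB.1 with hmdef
  -- closed form for f
  have hf2 : ∀ x : ℝ, f x = ∑ p : Fin d × Fin d,
      c p * (En 0 (mm p * (1 + x)) * En 0 (mm p * (1 - x))) := by
    intro x
    rw [hf x, ← double_int_f c mm x]
    exact intervalIntegral.integral_congr fun t _ =>
      intervalIntegral.integral_congr fun s _ => key1 B X hB (s + t + (s - t) * x)
  -- closed form for g
  have hg2 : ∀ x : ℝ, g x = ∑ p : Fin d × Fin d,
      (c p * mm p ^ 2) * (En 2 (mm p * (1 + x)) * En 0 (mm p * (1 - x))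
        - 2 * (En 1 (mm p * (1 + x)) * En 1 (mm p * (1 - x)))
        + En 0 (mm p * (1 + x)) * En 2 (mm p * (1 - x))) := by
    intro x
    rw [hg x, ← double_int_g (fun p => c p * mm p ^ 2) mm x]
    refine intervalIntegral.integral_congr fun t _ =>
      intervalIntegral.integral_congr fun s _ => ?_
    calc (fnorm ((s - t) • (mpow hB.1 ((s + t + (s - t) * x) / 2) * (L * X - X * L) *
          mpow hB.1 (-((s + t + (s - t) * x) / 2))))) ^ 2
        = (s - t) ^ 2 * fip (mpow hB.1 ((s + t + (s - t) * x) / 2) * (L * X - X * L) *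
            mpow hB.1 (-((s + t + (s - t) * x) / 2)))
            (mpow hB.1 ((s + t + (s - t) * x) / 2) * (L * X - X * L) *
            mpow hB.1 (-((s + t + (s - t) * x) / 2))) := by
          rw [fnorm, Real.sq_sqrt (fip_self_nonneg _), fip_smul_self]
      _ = (s - t) ^ 2 * ∑ p : Fin d × Fin d,
            c p * mm p ^ 2 * Real.exp ((s + t + (s - t) * x) * mm p) := by
          rw [hL, key2 B X hB (s + t + (s - t) * x)]
      _ = ∑ p : Fin d × Fin d,
            (s - t) ^ 2 * (c p * mm p ^ 2 * Real.exp ((s + t + (s - t) * x) * mm p)) :=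
          Finset.mul_sum _ _ _
  -- the first derivative
  set f' : ℝ → ℝ := fun x => ∑ p : Fin d × Fin d,
    (c p * mm p) * (En 1 (mm p * (1 + x)) * En 0 (mm p * (1 - x))
      - En 0 (mm p * (1 + x)) * En 1 (mm p * (1 - x))) with hf'def
  have hfd : ∀ x : ℝ, HasDerivAt f (f' x) x := by
    intro x
    have hfF : f = fun x => ∑ p : Fin d × Fin d,
        c p * (En 0 (mm p * (1 + x)) * En 0 (mm p * (1 - x))) := funext hf2
    rw [hfF, hf'def]
    refine HasDerivAt.fun_sum fun p _ => ?_
    have h := ((hEa 0 (mm p) x).mul (hEb 0 (mm p) x)).const_mul (c p)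
    refine h.congr_deriv ?_
    ring
  have hf'd : ∀ x : ℝ, HasDerivAt f' (g x) x := by
    intro x
    rw [hg2 x]
    rw [hf'def]
    refine HasDerivAt.fun_sum fun p _ => ?_
    have h := (((hEa 1 (mm p) x).mul (hEb 0 (mm p) x)).sub
      ((hEa 0 (mm p) x).mul (hEb 1 (mm p) x))).const_mul (c p * mm p)
    refine h.congr_deriv ?_
    ring
  have hnn : ∀ x : ℝ, 0 ≤ g x := by
    intro x
    rw [hg x]
    refine intervalIntegral.integral_nonneg zero_le_one fun t _ => ?_
    exact intervalIntegral.integral_nonneg zero_le_one fun s _ => sq_nonneg _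
  have hdf : deriv f = f' := funext fun x => (hfd x).deriv
  have hconv : ConvexOn ℝ Set.univ f := by
    refine convexOn_of_deriv2_nonneg convex_univ
      (fun x _ => (hfd x).differentiableAt.continuousAt.continuousWithinAt)
      (fun x _ => (hfd x).differentiableAt.differentiableWithinAt) ?_ ?_
    · rw [hdf]
      exact fun x _ => (hf'd x).differentiableAt.differentiableWithinAt
    · intro x _
      have h2 : deriv^[2] f x = deriv (deriv f) x := rfl
      rw [h2, hdf, (hf'd x).deriv]
      exact hnn x
  exact ⟨f', hfd, hf'd, hnn, hconv⟩
end

section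
/- Let A be a symmetric positive definite d×d real matrix and α ≤ 0. Then min{d^{1/2}, d^{-α/2}} · |A|^α ≤ |A^α|, where |·| is the Frobenius norm and A^α is the spectrally defined matrix power. -/
open Matrix MeasureTheory

variable {d : ℕ}

lemma fip_self_eq_trace (X : Matrix (Fin d) (Fin d) ℝ) : fip X X = Matrix.trace (X * Xᵀ) := by
  simp [fip, Matrix.trace, Matrix.mul_apply, Matrix.diag]

lemma fip_conj_s6 {A : Matrix (Fin d) (Fin d) ℝ} (hA : A.IsHermitian) (f : Fin d → ℝ) :
    fip ((hA.eigenvectorUnitary : Matrix (Fin d) (Fin d) ℝ) * Matrix.diagonal f *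
          (star hA.eigenvectorUnitary : Matrix (Fin d) (Fin d) ℝ))
        ((hA.eigenvectorUnitary : Matrix (Fin d) (Fin d) ℝ) * Matrix.diagonal f *
          (star hA.eigenvectorUnitary : Matrix (Fin d) (Fin d) ℝ)) = ∑ i, f i ^ 2 := by
  set P := (hA.eigenvectorUnitary : Matrix (Fin d) (Fin d) ℝ) with hPdef
  have h1 : star P * P = 1 := Unitary.coe_star_mul_self _
  have h2 : P * star P = 1 := Unitary.coe_mul_star_self _
  have hs : star P = Pᵀ := by
    ext i j; simp [Matrix.star_apply]
  rw [fip_self_eq_trace]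
  have ht : (P * Matrix.diagonal f * star P)ᵀ = P * Matrix.diagonal f * star P := by
    rw [hs]
    simp [Matrix.transpose_mul, Matrix.diagonal_transpose, Matrix.mul_assoc]
  rw [ht]
  have key : P * Matrix.diagonal f * star P * (P * Matrix.diagonal f * star P)
      = P * (Matrix.diagonal f * Matrix.diagonal f) * star P := by
    rw [Matrix.mul_assoc (P * Matrix.diagonal f) (star P),
      show star P * (P * Matrix.diagonal f * star P) = Matrix.diagonal f * star P by
        rw [← Matrix.mul_assoc, ← Matrix.mul_assoc, h1, Matrix.one_mul]]
    simp only [Matrix.mul_assoc]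
  rw [key, Matrix.trace_mul_cycle, ← Matrix.mul_assoc, h1, Matrix.one_mul,
    Matrix.diagonal_mul_diagonal, Matrix.trace_diagonal]
  simp [sq]

theorem stmt6 (A : Matrix (Fin d) (Fin d) ℝ) (hA : A.PosDef) (α : ℝ) (hα : α ≤ 0) :
    min (Real.sqrt d) ((d : ℝ) ^ (-α / 2)) * fnorm A ^ α ≤ fnorm (mpow hA.1 α) := by
  rcases Nat.eq_zero_or_pos d with hd | hd
  · subst hd
    have h0 : fnorm (mpow hA.1 α) = 0 := by simp [fnorm, fip]
    rw [h0]
    have hx : (0:ℝ) ≤ (0:ℝ) ^ (-α/2) := Real.rpow_nonneg le_rfl _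
    have hm : min (Real.sqrt ((0:ℕ):ℝ)) (((0:ℕ):ℝ) ^ (-α/2)) = 0 := by
      simp only [Nat.cast_zero, Real.sqrt_zero]
      exact min_eq_left hx
    rw [hm, zero_mul]
  haveI : Nonempty (Fin d) := Fin.pos_iff_nonempty.mp hd
  set lam := hA.1.eigenvalues with hlam
  have hpos : ∀ i, 0 < lam i := hA.eigenvalues_pos
  obtain ⟨i₀, -, hmax⟩ := Finset.exists_max_image Finset.univ lam ⟨Classical.arbitrary _, Finset.mem_univ _⟩
  set M := lam i₀ with hM
  have hMpos : 0 < M := hpos i₀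
  have hAeq : A = (hA.1.eigenvectorUnitary : Matrix (Fin d) (Fin d) ℝ) * Matrix.diagonal lam *
      (star hA.1.eigenvectorUnitary : Matrix (Fin d) (Fin d) ℝ) := by
    have h := hA.1.spectral_theorem
    simp only [RCLike.ofReal_real_eq_id, Function.id_comp] at h
    exact h
  have hs : fip A A = ∑ i, lam i ^ 2 := by rw [hAeq]; exact fip_conj_s6 hA.1 lam
  have ht : fip (mpow hA.1 α) (mpow hA.1 α) = ∑ i, (lam i ^ α) ^ 2 :=
    fip_conj_s6 hA.1 fun i => lam i ^ α
  have hMs : M ≤ Real.sqrt (fip A A) := by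
    rw [hs]
    refine (Real.le_sqrt hMpos.le (Finset.sum_nonneg fun i _ => sq_nonneg _)).mpr ?_
    exact Finset.single_le_sum (fun i _ => sq_nonneg (lam i)) (Finset.mem_univ i₀)
  have hta : (d : ℝ) * (M ^ α) ^ 2 ≤ fip (mpow hA.1 α) (mpow hA.1 α) := by
    rw [ht]
    have h2 : ∀ i ∈ Finset.univ, (M ^ α) ^ 2 ≤ (lam i ^ α) ^ 2 := by
      intro i _
      have := Real.rpow_le_rpow_of_nonpos (hpos i) (hmax i (Finset.mem_univ i)) hα
      exact pow_le_pow_left₀ (Real.rpow_nonneg hMpos.le α) this 2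
    calc (d : ℝ) * (M ^ α) ^ 2 = Finset.univ.card • ((M:ℝ) ^ α) ^ 2 := by
          simp [nsmul_eq_mul]
      _ ≤ ∑ i, (lam i ^ α) ^ 2 := Finset.card_nsmul_le_sum _ _ _ h2
  have hpow : Real.sqrt (fip A A) ^ α ≤ M ^ α :=
    Real.rpow_le_rpow_of_nonpos hMpos hMs hα
  calc min (Real.sqrt d) ((d : ℝ) ^ (-α / 2)) * fnorm A ^ α
      ≤ Real.sqrt d * (M ^ α) := by
        apply mul_le_mul (min_le_left _ _) hpow
          (Real.rpow_nonneg (Real.sqrt_nonneg _) _) (Real.sqrt_nonneg _)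
    _ = Real.sqrt ((d:ℝ) * (M ^ α) ^ 2) := by
        rw [Real.sqrt_mul (Nat.cast_nonneg d), Real.sqrt_sq (Real.rpow_nonneg hMpos.le α)]
    _ ≤ fnorm (mpow hA.1 α) := Real.sqrt_le_sqrt hta
end

section
/- Let H be a real inner product space and X : ℝ → H a function such that λ ↦ ‖X(λ)‖ is Lebesgue measurable and ‖X((α+β)/2)‖² ≤ ⟨X(α), X(β)⟩ for all α, β ∈ ℝ. Then λ ↦ ‖X(λ)‖ is logarithmically convex; that is, ‖X((1-t)α + tβ)‖ ≤ ‖X(α)‖^{1-t} ‖X(β)‖^{t} for all α, β ∈ ℝ and t ∈ [0,1]. -/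
open MeasureTheory Set Filter

/-- A measurable midpoint-convex function vanishing (≤0) at 0 and 1 is ≤ 0 on [0,1]. -/
lemma sierpinski_aux (f : ℝ → ℝ) (hf : Measurable f)
    (hmid : ∀ x y : ℝ, f ((x + y) / 2) ≤ (f x + f y) / 2)
    (h0 : f 0 ≤ 0) (h1 : f 1 ≤ 0) : ∀ t ∈ Icc (0:ℝ) 1, f t ≤ 0 := by
  intro t ht
  by_contra hc
  push_neg at hc
  set c := f t with hcdef
  have ht0 : t ≠ 0 := fun h => by rw [h] at hcdef; exact absurd hc (not_lt.2 (hcdef ▸ h0))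
  have ht1 : t ≠ 1 := fun h => by rw [h] at hcdef; exact absurd hc (not_lt.2 (hcdef ▸ h1))
  have htlt : 0 < t := lt_of_le_of_ne ht.1 (Ne.symm ht0)
  have htlt1 : t < 1 := lt_of_le_of_ne ht.2 ht1
  set r : ℝ := min t (1 - t) with hrdef
  have hr : 0 < r := lt_min htlt (by linarith)
  have hrt : r ≤ t := min_le_left _ _
  have hrt1 : r ≤ 1 - t := min_le_right _ _
  set T : ℕ → Set ℝ := fun n => Icc (0:ℝ) 1 ∩ f ⁻¹' Ici (2 ^ n * c) with hT
  have hTmeas : ∀ n, MeasurableSet (T n) :=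
    fun n => measurableSet_Icc.inter (hf measurableSet_Ici)
  -- Step A : volume (T 0) ≥ r
  have stepA : ENNReal.ofReal r ≤ volume (T 0) := by
    have hsub : Icc (t - r) (t + r) ⊆ T 0 ∪ (fun s => 2 * t - s) ⁻¹' (T 0) := by
      intro s hs
      have hs1 : s ∈ Icc (0:ℝ) 1 := ⟨by cases hs; linarith, by cases hs; linarith⟩
      have hs2 : 2 * t - s ∈ Icc (0:ℝ) 1 := ⟨by cases hs; linarith, by cases hs; linarith⟩
      have hmidt : c ≤ (f s + f (2 * t - s)) / 2 := by
        have := hmid s (2 * t - s)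
        have he : (s + (2 * t - s)) / 2 = t := by ring
        rw [he] at this
        linarith
      by_cases hcs : 2 ^ 0 * c ≤ f s
      · exact Or.inl ⟨hs1, hcs⟩
      · refine Or.inr ⟨hs2, ?_⟩
        simp only [mem_preimage, mem_Ici, pow_zero, one_mul] at hcs ⊢
        linarith
    have hv : volume (Icc (t - r) (t + r)) ≤ volume (T 0) + volume ((fun s => 2 * t - s) ⁻¹' (T 0)) :=
      le_trans (measure_mono hsub) (measure_union_le _ _)
    have hrefl : volume ((fun s : ℝ => 2 * t - s) ⁻¹' (T 0)) = volume (T 0) := by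
      have : (fun s : ℝ => 2 * t - s) ⁻¹' (T 0) = Neg.neg ⁻¹' ((fun s : ℝ => 2 * t + s) ⁻¹' (T 0)) := by
        ext x; simp [sub_eq_add_neg]
      rw [this, Measure.measure_preimage_neg, measure_preimage_add]
    rw [hrefl, Real.volume_Icc] at hv
    have h2r : t + r - (t - r) = 2 * r := by ring
    rw [h2r] at hv
    by_contra hlt
    push_neg at hlt
    have : ENNReal.ofReal (2 * r) < ENNReal.ofReal r + ENNReal.ofReal r := by
      calc ENNReal.ofReal (2 * r) ≤ volume (T 0) + volume (T 0) := hv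
        _ < ENNReal.ofReal r + ENNReal.ofReal r := by
            exact ENNReal.add_lt_add hlt hlt
    rw [← ENNReal.ofReal_add hr.le hr.le] at this
    have := (ENNReal.ofReal_lt_ofReal_iff (by linarith)).1 this
    linarith
  -- Step B : volume (T n) ≥ r for all n
  have stepB : ∀ n, ENNReal.ofReal r ≤ volume (T n) := by
    intro n
    induction n with
    | zero => exact stepA
    | succ n ih =>
      -- split T n into left and right halves
      have hsplit : T n ⊆ (T n ∩ Icc 0 (1/2 : ℝ)) ∪ (T n ∩ Icc (1/2 : ℝ) 1) := by
        intro x hx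
        rcases le_or_gt x (1/2 : ℝ) with h | h
        · exact Or.inl ⟨hx, hx.1.1, h⟩
        · exact Or.inr ⟨hx, h.le, hx.1.2⟩
      have hvle : volume (T n) ≤ volume (T n ∩ Icc 0 (1/2 : ℝ)) + volume (T n ∩ Icc (1/2:ℝ) 1) :=
        le_trans (measure_mono hsplit) (measure_union_le _ _)
      have key : ENNReal.ofReal (r/2) ≤ volume (T n ∩ Icc 0 (1/2:ℝ)) ∨
          ENNReal.ofReal (r/2) ≤ volume (T n ∩ Icc (1/2:ℝ) 1) := by
        by_contra hcon
        push_neg at hcon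
        have : volume (T n) < ENNReal.ofReal (r/2) + ENNReal.ofReal (r/2) :=
          lt_of_le_of_lt hvle (ENNReal.add_lt_add hcon.1 hcon.2)
        rw [← ENNReal.ofReal_add (by linarith) (by linarith)] at this
        have hh : (r/2 + r/2 : ℝ) = r := by ring
        rw [hh] at this
        exact absurd (lt_of_le_of_lt ih this) (lt_irrefl _)
      have hc2 : 0 < (2:ℝ) ^ n * c := by positivity
      rcases key with hA | hB
      · -- left half: double via x ↦ x / 2
        have himg : (fun v : ℝ => 2⁻¹ * v) ⁻¹' (T n ∩ Icc 0 (1/2:ℝ)) ⊆ T (n + 1) := by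
          rintro v ⟨⟨hvIcc, hvf⟩, hvI⟩
          simp only [mem_Icc] at hvI
          constructor
          · constructor <;> [linarith [hvI.1]; linarith [hvI.2]]
          · simp only [mem_preimage, mem_Ici] at hvf ⊢
            have := hmid 0 v
            have he : ((0:ℝ) + v) / 2 = 2⁻¹ * v := by ring
            rw [he] at this
            have : 2 ^ n * c ≤ (f 0 + f v) / 2 := le_trans hvf this
            have : 2 ^ (n+1) * c ≤ f 0 + f v := by rw [pow_succ]; linarith
            linarith
        calc ENNReal.ofReal r = ENNReal.ofReal 2 * ENNReal.ofReal (r/2) := by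
              rw [← ENNReal.ofReal_mul (by norm_num)]; congr 1; ring
          _ ≤ ENNReal.ofReal 2 * volume (T n ∩ Icc 0 (1/2:ℝ)) := by
              exact mul_le_mul_right hA _
          _ = volume ((fun v : ℝ => 2⁻¹ * v) ⁻¹' (T n ∩ Icc 0 (1/2:ℝ))) := by
              rw [Real.volume_preimage_mul_left (by norm_num : (2⁻¹:ℝ) ≠ 0)]
              norm_num
          _ ≤ volume (T (n+1)) := measure_mono himg
      · -- right half: double via x ↦ (x+1)/2
        have himg : (fun v : ℝ => v + 1) ⁻¹' ((fun v : ℝ => 2⁻¹ * v) ⁻¹' (T n ∩ Icc (1/2:ℝ) 1)) ⊆ T (n + 1) := by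
          rintro v hv
          simp only [mem_preimage] at hv
          obtain ⟨⟨hvIcc, hvf⟩, hvI⟩ := hv
          simp only [mem_Icc] at hvI
          constructor
          · constructor <;> [linarith [hvI.1]; linarith [hvI.2]]
          · simp only [mem_preimage, mem_Ici] at hvf ⊢
            have := hmid v 1
            have he : (v + 1) / 2 = 2⁻¹ * (v + 1) := by ring
            rw [he] at this
            have : 2 ^ n * c ≤ (f v + f 1) / 2 := le_trans hvf this
            have : 2 ^ (n+1) * c ≤ f v + f 1 := by rw [pow_succ]; linarith
            linarith
        calc ENNReal.ofReal r = ENNReal.ofReal 2 * ENNReal.ofReal (r/2) := by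
              rw [← ENNReal.ofReal_mul (by norm_num)]; congr 1; ring
          _ ≤ ENNReal.ofReal 2 * volume (T n ∩ Icc (1/2:ℝ) 1) := mul_le_mul_right hB _
          _ = volume ((fun v : ℝ => 2⁻¹ * v) ⁻¹' (T n ∩ Icc (1/2:ℝ) 1)) := by
              rw [Real.volume_preimage_mul_left (by norm_num : (2⁻¹:ℝ) ≠ 0)]
              norm_num
          _ = volume ((fun v : ℝ => v + 1) ⁻¹' ((fun v : ℝ => 2⁻¹ * v) ⁻¹' (T n ∩ Icc (1/2:ℝ) 1))) := by
              rw [measure_preimage_add_right]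
          _ ≤ volume (T (n+1)) := measure_mono himg
  -- Step C : intersection is nonempty, contradiction
  have hanti : Antitone T := by
    intro m n hmn x hx
    refine ⟨hx.1, ?_⟩
    have : (2:ℝ) ^ m * c ≤ 2 ^ n * c := by
      apply mul_le_mul_of_nonneg_right (pow_le_pow_right₀ one_le_two hmn) hc.le
    exact le_trans this hx.2
  have hfin : ∃ n, volume (T n) ≠ ⊤ := by
    refine ⟨0, ?_⟩
    have : volume (T 0) ≤ volume (Icc (0:ℝ) 1) := measure_mono (inter_subset_left)
    rw [Real.volume_Icc] at this
    exact ne_top_of_le_ne_top (by simp) this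
  have htend := tendsto_measure_iInter_atTop (fun n => (hTmeas n).nullMeasurableSet) hanti hfin
  have hint : ENNReal.ofReal r ≤ volume (⋂ n, T n) :=
    ge_of_tendsto' htend (fun n => stepB n)
  have hne : (⋂ n, T n).Nonempty := by
    apply nonempty_of_measure_ne_zero (μ := volume)
    intro h0'
    rw [h0'] at hint
    exact (ENNReal.ofReal_pos.2 hr).not_ge hint
  obtain ⟨u, hu⟩ := hne
  simp only [mem_iInter] at hu
  obtain ⟨n, hn⟩ := pow_unbounded_of_one_lt (f u / c) (one_lt_two (α := ℝ))
  have := (hu n).2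
  simp only [mem_preimage, mem_Ici] at this
  have : f u / c < f u / c := lt_of_lt_of_le hn (by
    rw [le_div_iff₀ hc]
    linarith [this])
  exact absurd this (lt_irrefl _)

/-- Measurable midpoint-convex functions on ℝ are convex. -/
lemma measurable_midpoint_convex (f : ℝ → ℝ) (hf : Measurable f)
    (hmid : ∀ x y : ℝ, f ((x + y) / 2) ≤ (f x + f y) / 2)
    (a b t : ℝ) (ht0 : 0 ≤ t) (ht1 : t ≤ 1) :
    f ((1 - t) * a + t * b) ≤ (1 - t) * f a + t * f b := by
  set g : ℝ → ℝ := fun s => f ((1 - s) * a + s * b) - ((1 - s) * f a + s * f b) with hg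
  have hgmeas : Measurable g := by
    apply Measurable.sub
    · exact hf.comp (by fun_prop)
    · fun_prop
  have hgmid : ∀ x y : ℝ, g ((x + y) / 2) ≤ (g x + g y) / 2 := by
    intro x y
    have he : (1 - (x + y)/2) * a + ((x + y)/2) * b
        = (((1 - x) * a + x * b) + ((1 - y) * a + y * b)) / 2 := by ring
    simp only [hg, he]
    have := hmid ((1 - x) * a + x * b) ((1 - y) * a + y * b)
    linarith
  have hg0 : g 0 ≤ 0 := by simp [hg]
  have hg1 : g 1 ≤ 0 := by simp [hg]
  have := sierpinski_aux g hgmeas hgmid hg0 hg1 t ⟨ht0, ht1⟩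
  simp only [hg] at this
  linarith

theorem stmt11 {H : Type*} [NormedAddCommGroup H] [InnerProductSpace ℝ H]
    (X : ℝ → H) (hmeas : Measurable fun l : ℝ => ‖X l‖)
    (hcond : ∀ α β : ℝ, ‖X ((α + β) / 2)‖ ^ 2 ≤ (inner ℝ (X α) (X β) : ℝ)) :
    ∀ (α β t : ℝ), 0 ≤ t → t ≤ 1 →
      ‖X ((1 - t) * α + t * β)‖ ≤ ‖X α‖ ^ (1 - t) * ‖X β‖ ^ t := by
  intro α β t ht0 ht1
  rcases eq_or_lt_of_le ht0 with h0 | h0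
  · simp [← h0]
  rcases eq_or_lt_of_le ht1 with h1 | h1
  · simp [h1]
  -- ε–regularization
  have key : ∀ ε : ℝ, 0 < ε →
      ‖X ((1 - t) * α + t * β)‖ ≤ (ε + ‖X α‖) ^ (1 - t) * (ε + ‖X β‖) ^ t := by
    intro ε hε
    set f : ℝ → ℝ := fun l => Real.log (ε + ‖X l‖) with hfdef
    have hpos : ∀ l : ℝ, 0 < ε + ‖X l‖ := fun l => by positivity
    have hfmeas : Measurable f := Real.measurable_log.comp (measurable_const.add hmeas)
    have hfmid : ∀ x y : ℝ, f ((x + y) / 2) ≤ (f x + f y) / 2 := by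
      intro x y
      have hcs : (inner ℝ (X x) (X y) : ℝ) ≤ ‖X x‖ * ‖X y‖ := real_inner_le_norm _ _
      have h1' : ‖X ((x + y)/2)‖ ^ 2 ≤ ‖X x‖ * ‖X y‖ := le_trans (hcond x y) hcs
      have hm : ‖X ((x + y)/2)‖ ≤ (‖X x‖ + ‖X y‖) / 2 := by
        nlinarith [norm_nonneg (X ((x+y)/2)), norm_nonneg (X x), norm_nonneg (X y),
          sq_nonneg (‖X x‖ - ‖X y‖)]
      have hsq : (ε + ‖X ((x + y)/2)‖) ^ 2 ≤ (ε + ‖X x‖) * (ε + ‖X y‖) := by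
        nlinarith [norm_nonneg (X ((x+y)/2))]
      have hlog : 2 * Real.log (ε + ‖X ((x + y)/2)‖) ≤
          Real.log (ε + ‖X x‖) + Real.log (ε + ‖X y‖) := by
        have := Real.log_le_log (by positivity) hsq
        rw [Real.log_pow, Real.log_mul (hpos x).ne' (hpos y).ne'] at this
        push_cast at this
        linarith
      simp only [hfdef]
      linarith
    have := measurable_midpoint_convex f hfmeas hfmid α β t ht0 ht1
    simp only [hfdef] at this
    have hexp : ε + ‖X ((1 - t) * α + t * β)‖ ≤ (ε + ‖X α‖) ^ (1 - t) * (ε + ‖X β‖) ^ t := by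
      have this' : Real.log (ε + ‖X ((1 - t) * α + t * β)‖) ≤
          Real.log (ε + ‖X α‖) * (1 - t) + Real.log (ε + ‖X β‖) * t := by linarith
      have h2 : Real.exp (Real.log (ε + ‖X ((1 - t) * α + t * β)‖)) ≤
          Real.exp (Real.log (ε + ‖X α‖) * (1 - t) + Real.log (ε + ‖X β‖) * t) :=
        Real.exp_le_exp.2 this'
      rw [Real.exp_log (hpos _), Real.exp_add] at h2
      rw [Real.rpow_def_of_pos (hpos α), Real.rpow_def_of_pos (hpos β)]
      exact h2
    linarith [norm_nonneg (X ((1 - t) * α + t * β))]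
  -- limit ε → 0⁺
  have htend : Tendsto (fun ε : ℝ => (ε + ‖X α‖) ^ (1 - t) * (ε + ‖X β‖) ^ t)
      (nhdsWithin 0 (Ioi 0)) (nhds (‖X α‖ ^ (1 - t) * ‖X β‖ ^ t)) := by
    have hA : Tendsto (fun ε : ℝ => ε + ‖X α‖) (nhdsWithin 0 (Ioi 0)) (nhds ‖X α‖) := by
      have h' : Tendsto (fun ε : ℝ => ε + ‖X α‖) (nhds 0) (nhds (0 + ‖X α‖)) :=
        (continuous_id.add continuous_const).tendsto 0
      rw [zero_add] at h'
      exact h'.mono_left nhdsWithin_le_nhds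
    have hB : Tendsto (fun ε : ℝ => ε + ‖X β‖) (nhdsWithin 0 (Ioi 0)) (nhds ‖X β‖) := by
      have h' : Tendsto (fun ε : ℝ => ε + ‖X β‖) (nhds 0) (nhds (0 + ‖X β‖)) :=
        (continuous_id.add continuous_const).tendsto 0
      rw [zero_add] at h'
      exact h'.mono_left nhdsWithin_le_nhds
    have hca : ContinuousAt (fun x : ℝ => x ^ (1 - t)) ‖X α‖ :=
      Real.continuousAt_rpow_const _ _ (Or.inr (by linarith : (0:ℝ) ≤ 1 - t))
    have hcb : ContinuousAt (fun x : ℝ => x ^ t) ‖X β‖ :=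
      Real.continuousAt_rpow_const _ _ (Or.inr h0.le)
    exact (hca.tendsto.comp hA).mul (hcb.tendsto.comp hB)
  refine ge_of_tendsto htend ?_
  filter_upwards [self_mem_nhdsWithin] with ε hε
  exact key ε hε
end

section
/- There exists a function X : ℝ → ℝ^{2×2} such that λ ↦ |X(λ)| (Frobenius norm) is logarithmically convex on ℝ, yet the strengthened condition ⟨X(α), X(β)⟩ ≥ |X((α+β)/2)|² fails for some α, β. Concretely, X(λ) with first row (sinh λ, 1) and second row (0, 0) satisfies |X(λ)| = cosh λ, which is logarithmically convex, but ⟨X(0), X(2)⟩ = 1 < cosh²(1) = |X(1)|². -/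
open Matrix MeasureTheory

variable {d : ℕ}

lemma holder2 {p q r s t : ℝ} (hp : 0 < p) (hq : 0 < q) (hr : 0 < r) (hs : 0 < s)
    (ht0 : 0 ≤ t) (ht1 : t ≤ 1) :
    p ^ (1 - t) * q ^ t + r ^ (1 - t) * s ^ t ≤ (p + r) ^ (1 - t) * (q + s) ^ t := by
  have hpr : 0 < p + r := by linarith
  have hqs : 0 < q + s := by linarith
  have ht1' : 0 ≤ 1 - t := by linarith
  have h1 := Real.geom_mean_le_arith_mean2_weighted ht1' ht0
    (div_nonneg hp.le hpr.le) (div_nonneg hq.le hqs.le) (by ring)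
  have h2 := Real.geom_mean_le_arith_mean2_weighted ht1' ht0
    (div_nonneg hr.le hpr.le) (div_nonneg hs.le hqs.le) (by ring)
  have key : (p / (p + r)) ^ (1 - t) * (q / (q + s)) ^ t
      + (r / (p + r)) ^ (1 - t) * (s / (q + s)) ^ t ≤ 1 := by
    have : (1 - t) * (p / (p + r)) + t * (q / (q + s))
        + ((1 - t) * (r / (p + r)) + t * (s / (q + s))) = 1 := by
      field_simp; try ring
    linarith
  rw [Real.div_rpow hp.le hpr.le, Real.div_rpow hq.le hqs.le, Real.div_rpow hr.le hpr.le,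
    Real.div_rpow hs.le hqs.le] at key
  have hprt : 0 < (p + r) ^ (1 - t) := Real.rpow_pos_of_pos hpr _
  have hqst : 0 < (q + s) ^ t := Real.rpow_pos_of_pos hqs _
  have := mul_le_mul_of_nonneg_left key (le_of_lt (mul_pos hprt hqst))
  calc p ^ (1 - t) * q ^ t + r ^ (1 - t) * s ^ t
      = (p + r) ^ (1 - t) * (q + s) ^ t *
        (p ^ (1 - t) / (p + r) ^ (1 - t) * (q ^ t / (q + s) ^ t)
          + r ^ (1 - t) / (p + r) ^ (1 - t) * (s ^ t / (q + s) ^ t)) := by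
        field_simp; try ring
    _ ≤ (p + r) ^ (1 - t) * (q + s) ^ t * 1 := this
    _ = (p + r) ^ (1 - t) * (q + s) ^ t := mul_one _

lemma cosh_logconvex (a b t : ℝ) (ht0 : 0 ≤ t) (ht1 : t ≤ 1) :
    Real.cosh ((1 - t) * a + t * b) ≤ Real.cosh a ^ (1 - t) * Real.cosh b ^ t := by
  have hexp : ∀ x y : ℝ, Real.exp ((1 - t) * x + t * y)
      = Real.exp x ^ (1 - t) * Real.exp y ^ t := by
    intro x y
    rw [Real.exp_add, mul_comm (1-t) x, mul_comm t y, Real.exp_mul, Real.exp_mul]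
  have h2 : ((2:ℝ)) ^ (1 - t) * (2:ℝ) ^ t = 2 := by
    rw [← Real.rpow_add (by norm_num)]; norm_num
  have key := holder2 (Real.exp_pos a) (Real.exp_pos b) (Real.exp_pos (-a)) (Real.exp_pos (-b))
    ht0 ht1
  rw [← hexp a b, ← hexp (-a) (-b)] at key
  have hab : (1 - t) * -a + t * -b = -((1 - t) * a + t * b) := by ring
  rw [hab] at key
  rw [Real.cosh_eq, Real.cosh_eq, Real.cosh_eq]
  rw [Real.div_rpow (by positivity) (by norm_num), Real.div_rpow (by positivity) (by norm_num)]
  rw [div_mul_div_comm, h2]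
  exact div_le_div_of_nonneg_right key (by norm_num) |>.trans_eq rfl

theorem stmt12 (X : ℝ → Matrix (Fin 2) (Fin 2) ℝ)
    (hX : ∀ l : ℝ, X l = !![Real.sinh l, 1; 0, 0]) :
    (∀ l : ℝ, fnorm (X l) = Real.cosh l) ∧
    (∀ (α β t : ℝ), 0 ≤ t → t ≤ 1 →
      fnorm (X ((1 - t) * α + t * β)) ≤ fnorm (X α) ^ (1 - t) * fnorm (X β) ^ t) ∧
    fip (X 0) (X 2) = 1 ∧
    fip (X 0) (X 2) < (fnorm (X 1)) ^ 2 ∧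
    (fnorm (X 1)) ^ 2 = Real.cosh 1 ^ 2 := by
  have hf : ∀ l : ℝ, fnorm (X l) = Real.cosh l := by
    intro l
    have : fip (X l) (X l) = Real.cosh l ^ 2 := by
      simp [fip, hX, Fin.sum_univ_two, Real.cosh_sq]; ring
    rw [fnorm, this, Real.sqrt_sq (Real.cosh_pos l).le]
  refine ⟨hf, ?_, ?_, ?_, ?_⟩
  · intro α β t ht0 ht1
    rw [hf, hf, hf]
    exact cosh_logconvex α β t ht0 ht1
  · simp [fip, hX, Fin.sum_univ_two]
  · have h1 : fip (X 0) (X 2) = 1 := by simp [fip, hX, Fin.sum_univ_two]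
    rw [h1, hf]
    have : 1 < Real.cosh 1 := by rw [Real.one_lt_cosh]; norm_num
    nlinarith
  · rw [hf]
end

section
/- Let A : ℝ → ℝ^{2×2} be defined by A(x) with rows (cosh x, 1) and (1, 2). Then A(x) is symmetric positive definite for every x ∈ ℝ, and for every x ∈ ℝ, ⟨A'(x), (A³)'(x)⟩ = (3/4 + 1/(4 + 8 cosh² x)) · |(A²)'(x)|², where ⟨·,·⟩ and |·| are the Frobenius inner product and norm; in particular the ratio ⟨A', (A³)'⟩ / |(A²)'|² is strictly greater than 3/4 everywhere. -/
open Matrix MeasureTheory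

variable {d : ℕ}

theorem stmt13 (A : ℝ → Matrix (Fin 2) (Fin 2) ℝ)
    (hA : ∀ x : ℝ, A x = !![Real.cosh x, 1; 1, 2]) :
    (∀ x : ℝ, (A x).PosDef) ∧
    (∀ x : ℝ, fip (mderiv A x) (mderiv (fun y => (A y) ^ 3) x) =
      (3 / 4 + 1 / (4 + 8 * Real.cosh x ^ 2)) *
        (fnorm (mderiv (fun y => (A y) ^ 2) x)) ^ 2) ∧
    (∀ x : ℝ, mderiv (fun y => (A y) ^ 2) x ≠ 0 →
      3 / 4 < fip (mderiv A x) (mderiv (fun y => (A y) ^ 3) x) /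
        (fnorm (mderiv (fun y => (A y) ^ 2) x)) ^ 2) := by
  have h2 : ∀ y, (A y) ^ 2 =
      !![Real.cosh y ^ 2 + 1, Real.cosh y + 2; Real.cosh y + 2, (5:ℝ)] := by
    intro y
    rw [pow_two, hA]
    ext i j
    fin_cases i <;> fin_cases j <;>
      simp [Matrix.mul_apply, Fin.sum_univ_two] <;> ring
  have h3 : ∀ y, (A y) ^ 3 =
      !![Real.cosh y ^ 3 + 2 * Real.cosh y + 2, Real.cosh y ^ 2 + 2 * Real.cosh y + 5;
         Real.cosh y ^ 2 + 2 * Real.cosh y + 5, Real.cosh y + 12] := by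
    intro y
    rw [pow_succ, h2, hA]
    ext i j
    fin_cases i <;> fin_cases j <;>
      simp [Matrix.mul_apply, Fin.sum_univ_two] <;> ring
  -- derivatives
  have hm1 : ∀ x, mderiv A x = !![Real.sinh x, 0; 0, 0] := by
    intro x
    ext i j
    simp only [mderiv, Matrix.of_apply]
    have hfun : ∀ i j, (fun y => A y i j) =
        (fun y => (!![Real.cosh y, 1; 1, (2:ℝ)]) i j) := by
      intro i j; funext y; rw [hA]
    rw [hfun]
    fin_cases i <;> fin_cases j <;>
      simp [Real.deriv_cosh]
  have hm2 : ∀ x, mderiv (fun y => (A y) ^ 2) x =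
      !![2 * Real.cosh x * Real.sinh x, Real.sinh x; Real.sinh x, 0] := by
    intro x
    ext i j
    simp only [mderiv, Matrix.of_apply]
    have hfun : ∀ i j, (fun y => ((A y) ^ 2) i j) =
        (fun y => (!![Real.cosh y ^ 2 + 1, Real.cosh y + 2;
          Real.cosh y + 2, (5:ℝ)]) i j) := by
      intro i j; funext y; rw [h2]
    rw [hfun]
    have h := Real.hasDerivAt_cosh x
    fin_cases i <;> fin_cases j
    · show deriv (fun y => Real.cosh y ^ 2 + 1) x = 2 * Real.cosh x * Real.sinh x
      have hd : HasDerivAt (fun y => Real.cosh y ^ 2 + 1) _ x := (h.pow 2).add_const 1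
      rw [hd.deriv]; ring
    · show deriv (fun y => Real.cosh y + 2) x = Real.sinh x
      rw [(h.add_const 2).deriv]
    · show deriv (fun y => Real.cosh y + 2) x = Real.sinh x
      rw [(h.add_const 2).deriv]
    · show deriv (fun _ => (5:ℝ)) x = 0
      simp
  have hm3 : ∀ x, mderiv (fun y => (A y) ^ 3) x =
      !![3 * Real.cosh x ^ 2 * Real.sinh x + 2 * Real.sinh x,
         2 * Real.cosh x * Real.sinh x + 2 * Real.sinh x;
         2 * Real.cosh x * Real.sinh x + 2 * Real.sinh x, Real.sinh x] := by
    intro x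
    ext i j
    simp only [mderiv, Matrix.of_apply]
    have hfun : ∀ i j, (fun y => ((A y) ^ 3) i j) =
        (fun y => (!![Real.cosh y ^ 3 + 2 * Real.cosh y + 2,
          Real.cosh y ^ 2 + 2 * Real.cosh y + 5;
          Real.cosh y ^ 2 + 2 * Real.cosh y + 5, Real.cosh y + 12]) i j) := by
      intro i j; funext y; rw [h3]
    rw [hfun]
    have h := Real.hasDerivAt_cosh x
    fin_cases i <;> fin_cases j
    · show deriv (fun y => Real.cosh y ^ 3 + 2 * Real.cosh y + 2) x =
        3 * Real.cosh x ^ 2 * Real.sinh x + 2 * Real.sinh x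
      have hd : HasDerivAt (fun y => Real.cosh y ^ 3 + 2 * Real.cosh y + 2) _ x :=
        ((h.pow 3).add (h.const_mul 2)).add_const 2
      rw [hd.deriv]; ring
    · show deriv (fun y => Real.cosh y ^ 2 + 2 * Real.cosh y + 5) x =
        2 * Real.cosh x * Real.sinh x + 2 * Real.sinh x
      have hd : HasDerivAt (fun y => Real.cosh y ^ 2 + 2 * Real.cosh y + 5) _ x :=
        ((h.pow 2).add (h.const_mul 2)).add_const 5
      rw [hd.deriv]; ring
    · show deriv (fun y => Real.cosh y ^ 2 + 2 * Real.cosh y + 5) x =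
        2 * Real.cosh x * Real.sinh x + 2 * Real.sinh x
      have hd : HasDerivAt (fun y => Real.cosh y ^ 2 + 2 * Real.cosh y + 5) _ x :=
        ((h.pow 2).add (h.const_mul 2)).add_const 5
      rw [hd.deriv]; ring
    · show deriv (fun y => Real.cosh y + 12) x = Real.sinh x
      rw [(h.add_const 12).deriv]
  set c := fun x : ℝ => Real.cosh x with hc
  have hfip13 : ∀ x, fip (mderiv A x) (mderiv (fun y => (A y) ^ 3) x) =
      Real.sinh x ^ 2 * (3 * Real.cosh x ^ 2 + 2) := by
    intro x
    rw [hm1, hm3]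
    simp [fip, Fin.sum_univ_two]
    ring
  have hfn2 : ∀ x, (fnorm (mderiv (fun y => (A y) ^ 2) x)) ^ 2 =
      Real.sinh x ^ 2 * (4 * Real.cosh x ^ 2 + 2) := by
    intro x
    have hf : fip (mderiv (fun y => (A y) ^ 2) x) (mderiv (fun y => (A y) ^ 2) x) =
        Real.sinh x ^ 2 * (4 * Real.cosh x ^ 2 + 2) := by
      rw [hm2]
      simp [fip, Fin.sum_univ_two]
      ring
    rw [fnorm, Real.sq_sqrt (by rw [hf]; positivity), hf]
  refine ⟨?_, ?_, ?_⟩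
  · intro x
    rw [hA]
    rw [posDef_iff_dotProduct_mulVec]
    constructor
    · ext i j
      fin_cases i <;> fin_cases j <;> simp [Matrix.conjTranspose_apply]
    · intro v hv
      have hc1 : 1 ≤ Real.cosh x := Real.one_le_cosh x
      have hv0 : v 0 ≠ 0 ∨ v 1 ≠ 0 := by
        by_contra hcon
        push_neg at hcon
        exact hv (funext fun i => by fin_cases i <;> simp [hcon.1, hcon.2])
      simp [dotProduct, Matrix.mulVec, Fin.sum_univ_two]
      have h1 : (0:ℝ) < (v 0 + v 1)^2 + v 1 ^ 2 := by
        rcases hv0 with h | h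
        · rcases eq_or_ne (v 1) 0 with h1 | h1
          · have : 0 < v 0 ^ 2 := by positivity
            nlinarith
          · have : 0 < v 1 ^ 2 := by positivity
            nlinarith [sq_nonneg (v 0 + v 1)]
        · have : 0 < v 1 ^ 2 := by positivity
          nlinarith [sq_nonneg (v 0 + v 1)]
      nlinarith [sq_nonneg (v 0)]
  · intro x
    rw [hfip13, hfn2]
    have hpos : (0:ℝ) < 4 + 8 * Real.cosh x ^ 2 := by positivity
    field_simp
    ring
  · intro x hne
    have hs : Real.sinh x ≠ 0 := by
      intro h0
      apply hne
      rw [hm2, h0]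
      ext i j
      fin_cases i <;> fin_cases j <;> simp
    have hs2 : (0:ℝ) < Real.sinh x ^ 2 := by positivity
    have hfn : (0:ℝ) < Real.sinh x ^ 2 * (4 * Real.cosh x ^ 2 + 2) := by
      nlinarith [sq_nonneg (Real.cosh x)]
    rw [hfip13, hfn2, lt_div_iff₀ hfn]
    nlinarith [sq_nonneg (Real.cosh x)]
end

section
/- Let k ∈ ℕ and define the non-symmetric matrix function A(x) with rows (cosh x, k) and (0, k²). Then A(x) satisfies ⟨A(x)v, v⟩ > 0 for all nonzero v ∈ ℝ² and all x ∈ ℝ, and for x ≠ 0 the ratio ⟨A'(x), (A³)'(x)⟩ / |(A²)'(x)|² equals 3/(4 + k²/cosh² x), which is strictly less than 3/4 and tends to 0 at x = 0 as k → ∞. Hence the inequality ⟨A', (A³)'⟩ ≥ c|(A²)'|² fails for non-symmetric positive definite matrix functions for every constant c > 0. -/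
open Matrix MeasureTheory

variable {d : ℕ}

theorem stmt14 (A : ℕ → ℝ → Matrix (Fin 2) (Fin 2) ℝ)
    (hA : ∀ (k : ℕ) (x : ℝ), A k x = !![Real.cosh x, (k : ℝ); 0, (k : ℝ) ^ 2]) :
    (∀ (k : ℕ), 0 < k → ∀ (x : ℝ) (v : Fin 2 → ℝ), v ≠ 0 →
      0 < (A k x).mulVec v ⬝ᵥ v) ∧
    (∀ (k : ℕ), 0 < k → ∀ x : ℝ, x ≠ 0 →
      fip (mderiv (A k) x) (mderiv (fun y => (A k y) ^ 3) x) /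
        (fnorm (mderiv (fun y => (A k y) ^ 2) x)) ^ 2 =
        3 / (4 + (k : ℝ) ^ 2 / Real.cosh x ^ 2) ∧
      3 / (4 + (k : ℝ) ^ 2 / Real.cosh x ^ 2) < 3 / 4) ∧
    Filter.Tendsto (fun k : ℕ => 3 / (4 + (k : ℝ) ^ 2)) Filter.atTop (nhds 0) ∧
    (∀ c : ℝ, 0 < c → ∃ (k : ℕ) (x : ℝ), 0 < k ∧ x ≠ 0 ∧
      fip (mderiv (A k) x) (mderiv (fun y => (A k y) ^ 3) x) <
        c * (fnorm (mderiv (fun y => (A k y) ^ 2) x)) ^ 2) := by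
  have hsq : ∀ (k : ℕ) (y : ℝ), (A k y) ^ 2 =
      !![Real.cosh y * Real.cosh y + (k:ℝ) * 0,
         Real.cosh y * (k:ℝ) + (k:ℝ) * (k:ℝ)^2;
         0 * Real.cosh y + (k:ℝ)^2 * 0,
         0 * (k:ℝ) + (k:ℝ)^2 * (k:ℝ)^2] := by
    intro k y; rw [pow_two, hA, Matrix.mul_fin_two]
  have hcube : ∀ (k : ℕ) (y : ℝ), (A k y) ^ 3 =
      !![Real.cosh y ^ 3, (k:ℝ) * Real.cosh y ^ 2 + (k:ℝ)^3 * Real.cosh y + (k:ℝ)^5;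
         0, (k:ℝ)^6] := by
    intro k y
    rw [pow_succ, hsq, hA, Matrix.mul_fin_two]
    congr 1 <;> ring_nf
  have hd1 : ∀ (k : ℕ) (x : ℝ), mderiv (A k) x = !![Real.sinh x, 0; 0, 0] := by
    intro k x
    ext i j
    fin_cases i <;> fin_cases j <;>
      simp only [mderiv, Matrix.of_apply, hA] <;> simp
  have hd2 : ∀ (k : ℕ) (x : ℝ), mderiv (fun y => (A k y) ^ 2) x =
      !![2 * Real.cosh x * Real.sinh x, (k:ℝ) * Real.sinh x; 0, 0] := by
    intro k x
    ext i j
    fin_cases i <;> fin_cases j <;> simp only [mderiv, Matrix.of_apply, hsq] <;>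
      simp <;> ring
  have hd3 : ∀ (k : ℕ) (x : ℝ), mderiv (fun y => (A k y) ^ 3) x =
      !![3 * Real.cosh x ^ 2 * Real.sinh x,
         (2 * (k:ℝ) * Real.cosh x + (k:ℝ)^3) * Real.sinh x; 0, 0] := by
    intro k x
    have hc : HasDerivAt Real.cosh (Real.sinh x) x := Real.hasDerivAt_cosh x
    ext i j
    fin_cases i <;> fin_cases j <;> simp only [mderiv, Matrix.of_apply, hcube] <;>
      simp <;> try ring
    have h : HasDerivAt
        (fun y => (k:ℝ) * Real.cosh y ^ 2 + (k:ℝ)^3 * Real.cosh y)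
        ((2 * (k:ℝ) * Real.cosh x + (k:ℝ)^3) * Real.sinh x) x := by
      have := ((hc.pow 2).const_mul (k:ℝ)).add (hc.const_mul ((k:ℝ)^3))
      refine this.congr_deriv ?_
      norm_num
      ring
    rw [h.deriv]; ring
  have hfip13 : ∀ (k : ℕ) (x : ℝ),
      fip (mderiv (A k) x) (mderiv (fun y => (A k y)^3) x)
        = 3 * Real.cosh x ^ 2 * Real.sinh x ^ 2 := by
    intro k x
    rw [hd1, hd3]
    simp [fip, Fin.sum_univ_two]
    ring
  have hfip22 : ∀ (k : ℕ) (x : ℝ),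
      (fnorm (mderiv (fun y => (A k y)^2) x)) ^ 2
        = (4 * Real.cosh x ^ 2 + (k:ℝ)^2) * Real.sinh x ^ 2 := by
    intro k x
    rw [hd2]
    rw [fnorm, Real.sq_sqrt]
    · simp [fip, Fin.sum_univ_two]; ring
    · simp [fip, Fin.sum_univ_two]; nlinarith [sq_nonneg (2 * Real.cosh x * Real.sinh x), sq_nonneg ((k:ℝ) * Real.sinh x)]
  refine ⟨?_, ?_, ?_, ?_⟩
  · intro k hk x v hv
    rw [hA]
    have h0 : v 0 ≠ 0 ∨ v 1 ≠ 0 := by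
      by_contra h
      push_neg at h
      apply hv; ext i; fin_cases i <;> simp [h.1, h.2]
    have hc1 : (1:ℝ) ≤ Real.cosh x := Real.one_le_cosh x
    have hk1 : (1:ℝ) ≤ (k:ℝ) := by exact_mod_cast hk
    simp [Matrix.mulVec, dotProduct, Fin.sum_univ_two]
    rcases h0 with h | h
    · nlinarith [sq_nonneg (v 0 + (k:ℝ) * v 1), sq_pos_of_ne_zero h,
        sq_nonneg ((k:ℝ) * v 1), sq_nonneg (v 1)]
    · have hkv : (k:ℝ) * v 1 ≠ 0 :=
        mul_ne_zero (by positivity) h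
      nlinarith [sq_nonneg (v 0 + (k:ℝ) * v 1), sq_pos_of_ne_zero hkv,
        sq_nonneg (v 0)]
  · intro k hk x hx
    have hs : Real.sinh x ≠ 0 := Real.sinh_ne_zero.mpr hx
    have hc : (0:ℝ) < Real.cosh x := Real.cosh_pos x
    have hkpos : (0:ℝ) < (k:ℝ) := by exact_mod_cast hk
    constructor
    · rw [hfip13, hfip22]
      have h4 : (4 * Real.cosh x ^ 2 + (k:ℝ)^2) ≠ 0 := by positivity
      field_simp
    · apply div_lt_div_of_pos_left (by norm_num) (by norm_num)
      have : (0:ℝ) < (k:ℝ)^2 / Real.cosh x ^ 2 := by positivity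
      linarith
  · have h1 : Filter.Tendsto (fun k : ℕ => 4 + (k:ℝ)^2) Filter.atTop Filter.atTop := by
      apply Filter.tendsto_atTop_add_const_left
      exact (Filter.tendsto_pow_atTop (by norm_num)).comp tendsto_natCast_atTop_atTop
    exact Filter.Tendsto.div_atTop tendsto_const_nhds h1
  · intro c hc
    obtain ⟨n, hn⟩ := exists_nat_gt (3 * Real.cosh 1 ^ 2 / c)
    refine ⟨n + 1, 1, Nat.succ_pos n, one_ne_zero, ?_⟩
    rw [hfip13, hfip22]
    have hs : (0:ℝ) < Real.sinh 1 ^ 2 := by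
      have : Real.sinh 1 ≠ 0 := Real.sinh_ne_zero.mpr one_ne_zero
      positivity
    have hcc : (0:ℝ) < Real.cosh 1 := Real.cosh_pos 1
    have hkgt : 3 * Real.cosh 1 ^ 2 / c < (n:ℝ) + 1 := by
      have h1 : (n:ℝ) ≤ (n:ℝ) + 1 := by linarith
      linarith
    have hkey : 3 * Real.cosh 1 ^ 2 < c * ((n:ℝ) + 1)^2 := by
      have h1 : 3 * Real.cosh 1 ^ 2 < c * ((n:ℝ) + 1) := by
        rw [div_lt_iff₀ hc] at hkgt; linarith
      have h2 : (1:ℝ) ≤ (n:ℝ) + 1 := by have := Nat.cast_nonneg (α:=ℝ) n; linarith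
      nlinarith
    have hcast : ((n + 1 : ℕ) : ℝ) = (n:ℝ) + 1 := by push_cast; ring
    rw [hcast]
    have h3 : (0:ℝ) ≤ c * (4 * Real.cosh 1 ^ 2) := by positivity
    nlinarith
end

section
/- Define the 2×2 matrix function A(x) with rows (1, sin x) and (sin x, m), where m > 2 is a real parameter, for x ∈ [−1, 1]. Then A(x) is symmetric positive definite and the ratio ⟨A'(x), (A³)'(x)⟩ / |(A²)'(x)|² equals (m² + m + 1 + 3 sin² x)/(m² + 2m + 1 + 4 sin² x); in particular, at x = 0 this ratio equals (m² + m + 1)/(m + 1)², which tends to 1 as m → ∞. -/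
open Matrix MeasureTheory

variable {d : ℕ}

lemma sqA (m s : ℝ) : (!![1, s; s, m] : Matrix (Fin 2) (Fin 2) ℝ) ^ 2 =
    !![1 + s^2, s + m*s; s + m*s, s^2 + m^2] := by
  rw [pow_two]
  ext i j
  fin_cases i <;> fin_cases j <;>
    simp [Matrix.mul_apply, Fin.sum_univ_two] <;> ring

lemma cubeA (m s : ℝ) : (!![1, s; s, m] : Matrix (Fin 2) (Fin 2) ℝ) ^ 3 =
    !![1 + (2+m)*s^2, (1+m+m^2)*s + s^3; (1+m+m^2)*s + s^3, m^3 + (1+2*m)*s^2] := by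
  rw [pow_succ, sqA]
  ext i j
  fin_cases i <;> fin_cases j <;>
    simp [Matrix.mul_apply, Fin.sum_univ_two] <;> ring

lemma md1 (A : ℝ → ℝ → Matrix (Fin 2) (Fin 2) ℝ)
    (hA : ∀ m x : ℝ, A m x = !![1, Real.sin x; Real.sin x, m]) (m x : ℝ) :
    mderiv (A m) x = !![0, Real.cos x; Real.cos x, 0] := by
  ext i j
  fin_cases i <;> fin_cases j <;> simp only [mderiv, Matrix.of_apply, hA] <;> simp

lemma md2 (A : ℝ → ℝ → Matrix (Fin 2) (Fin 2) ℝ)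
    (hA : ∀ m x : ℝ, A m x = !![1, Real.sin x; Real.sin x, m]) (m x : ℝ) :
    mderiv (fun y => (A m y) ^ 2) x =
    !![2*Real.sin x*Real.cos x, (1+m)*Real.cos x;
       (1+m)*Real.cos x, 2*Real.sin x*Real.cos x] := by
  ext i j
  fin_cases i <;> fin_cases j <;> simp only [mderiv, Matrix.of_apply, hA, sqA] <;> simp <;> ring

lemma md3 (A : ℝ → ℝ → Matrix (Fin 2) (Fin 2) ℝ)
    (hA : ∀ m x : ℝ, A m x = !![1, Real.sin x; Real.sin x, m]) (m x : ℝ) :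
    mderiv (fun y => (A m y) ^ 3) x =
    !![(2*(2+m)*Real.sin x)*Real.cos x, (1+m+m^2+3*Real.sin x^2)*Real.cos x;
       (1+m+m^2+3*Real.sin x^2)*Real.cos x, (2*(1+2*m)*Real.sin x)*Real.cos x] := by
  ext i j
  fin_cases i <;> fin_cases j <;> simp only [mderiv, Matrix.of_apply, hA, cubeA] <;> simp <;> ring

lemma ratio_eq (A : ℝ → ℝ → Matrix (Fin 2) (Fin 2) ℝ)
    (hA : ∀ m x : ℝ, A m x = !![1, Real.sin x; Real.sin x, m]) (m : ℝ)
    (x : ℝ) (hx : x ∈ Set.Icc (-1 : ℝ) 1) :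
      fip (mderiv (A m) x) (mderiv (fun y => (A m y) ^ 3) x) /
        (fnorm (mderiv (fun y => (A m y) ^ 2) x)) ^ 2 =
        (m ^ 2 + m + 1 + 3 * Real.sin x ^ 2) /
          (m ^ 2 + 2 * m + 1 + 4 * Real.sin x ^ 2) := by
  have hc : 0 < Real.cos x := by
    apply Real.cos_pos_of_mem_Ioo
    constructor
    · nlinarith [Real.pi_gt_three, hx.1]
    · nlinarith [Real.pi_gt_three, hx.2]
  set s := Real.sin x with hs
  set c := Real.cos x with hcx
  have h1 : fip (mderiv (A m) x) (mderiv (fun y => (A m y) ^ 3) x) =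
      2 * c^2 * (m^2 + m + 1 + 3*s^2) := by
    rw [md1 A hA, md3 A hA]
    simp [fip, Fin.sum_univ_two]
    ring
  have h2 : (fnorm (mderiv (fun y => (A m y) ^ 2) x))^2 =
      2 * c^2 * (m^2 + 2*m + 1 + 4*s^2) := by
    rw [fnorm, Real.sq_sqrt, md2 A hA]
    · simp [fip, Fin.sum_univ_two]; ring
    · rw [md2 A hA]; simp [fip, Fin.sum_univ_two]
      nlinarith [sq_nonneg (s*c), sq_nonneg ((1+m)*c)]
  rw [h1, h2, mul_div_mul_left]
  exact ne_of_gt (mul_pos two_pos (pow_pos hc 2))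

lemma posdef_part (m : ℝ) (hm : 2 < m) (x : ℝ) :
    (!![1, Real.sin x; Real.sin x, m] : Matrix (Fin 2) (Fin 2) ℝ).PosDef := by
  rw [Matrix.posDef_iff_dotProduct_mulVec]
  constructor
  · ext i j
    fin_cases i <;> fin_cases j <;> simp [Matrix.conjTranspose, Matrix.vecHead, Matrix.vecTail]
  · intro v hv
    have hs2 : Real.sin x ^ 2 ≤ 1 := Real.sin_sq_le_one x
    simp only [star, Matrix.mulVec, dotProduct, Fin.sum_univ_two]
    simp
    rcases eq_or_ne (v 1) 0 with h | h
    · have h0' : v 0 ≠ 0 := by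
        intro h0'
        apply hv; funext i; fin_cases i <;> simp [h0', h]
      simp [h]
      nlinarith [mul_self_pos.mpr h0']
    · nlinarith [sq_nonneg (v 0 + Real.sin x * v 1), mul_self_pos.mpr h]

lemma lim_part : Filter.Tendsto (fun m : ℝ => (m ^ 2 + m + 1) / (m + 1) ^ 2)
    Filter.atTop (nhds 1) := by
  have h1 : Filter.Tendsto (fun m : ℝ => (m+1)⁻¹) Filter.atTop (nhds 0) :=
    (Filter.tendsto_atTop_add_const_right _ 1 Filter.tendsto_id).inv_tendsto_atTop
  have h : Filter.Tendsto (fun m : ℝ => 1 - (m+1)⁻¹ + ((m+1)⁻¹)^2) Filter.atTop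
      (nhds (1 - 0 + 0^2)) :=
    (Filter.Tendsto.sub tendsto_const_nhds h1).add (h1.pow 2)
  norm_num at h
  apply h.congr'
  filter_upwards [Filter.eventually_gt_atTop (0:ℝ)] with m hm
  have hne : m + 1 ≠ 0 := by linarith
  field_simp
  ring

theorem stmt19 (A : ℝ → ℝ → Matrix (Fin 2) (Fin 2) ℝ)
    (hA : ∀ m x : ℝ, A m x = !![1, Real.sin x; Real.sin x, m]) :
    (∀ m : ℝ, 2 < m → ∀ x ∈ Set.Icc (-1 : ℝ) 1, (A m x).PosDef) ∧
    (∀ m : ℝ, 2 < m → ∀ x ∈ Set.Icc (-1 : ℝ) 1,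
      fip (mderiv (A m) x) (mderiv (fun y => (A m y) ^ 3) x) /
        (fnorm (mderiv (fun y => (A m y) ^ 2) x)) ^ 2 =
        (m ^ 2 + m + 1 + 3 * Real.sin x ^ 2) /
          (m ^ 2 + 2 * m + 1 + 4 * Real.sin x ^ 2)) ∧
    (∀ m : ℝ, 2 < m →
      fip (mderiv (A m) 0) (mderiv (fun y => (A m y) ^ 3) 0) /
        (fnorm (mderiv (fun y => (A m y) ^ 2) 0)) ^ 2 =
        (m ^ 2 + m + 1) / (m + 1) ^ 2) ∧
    Filter.Tendsto (fun m : ℝ => (m ^ 2 + m + 1) / (m + 1) ^ 2)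
      Filter.atTop (nhds 1) := by
  refine ⟨?_, ?_, ?_, lim_part⟩
  · intro m hm x hx
    rw [hA]
    exact posdef_part m hm x
  · intro m hm x hx
    exact ratio_eq A hA m x hx
  · intro m hm
    have h := ratio_eq A hA m 0 (by constructor <;> norm_num)
    simpa [show ((m:ℝ)+1)^2 = m^2+2*m+1 by ring] using h
end
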